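/- arXiv:math/0404298 — 8 statements merged into one kernel-verified Lean document; each statement's English description precedes it below -/
import Mathlib

section
/- Let X be a strip-concave trapezoidal array of size (n,m) with μ^X = 0 (i.e., x_{i0} = 0 for all i). Then for every subset I ⊆ {1,…,n} with k := |I|, the inequality λ[1,k] − ν(I) − Δ_k ≥ 0 holds, where λ := λ^X, λ̄ := λ̄^X, ν := ν^X, Δ_k := Σ_{j=1}^{n+m} max{0, λ̄_{j−k} − λ_j} (with λ̄_{j−k} := −∞, i.e. the term taken as 0, if j−k ≤ 0 or j−k > m), λ[1,k] := λ_1 + … + λ_k, and ν(I) := Σ_{i∈I} ν_i. -/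
open Finset

/-!
Induction on the number of rows, with the row-`n` quantity `λ[1,k] = x_{n,k}` (as `μ = 0`).
Adding a row `n + 1 ∉ I` can only help, since `∂x_{n+1,j} ≥ ∂x_{n,j}`. If `n + 1 ∈ I`, then
`λ^{(n+1)}[1,k+1] − ν_{n+1} = λ^{(n)}[1,k] + Σ_{j=k+1}^{n+m} (∂x_{n,j} − ∂x_{n+1,j+1})`, a sum of
nonnegative terms by the second strip-concavity inequality, and it dominates the growth
`Δ^{(n+1)}_{k+1} − Δ^{(n)}_k` termwise.
-/

/-- Row derivative `∂x_{ij} := x_{ij} − x_{i,j−1}`. -/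
noncomputable def pd (x : ℕ → ℕ → ℝ) (i j : ℕ) : ℝ := x i j - x i (j - 1)

/-- Strip-concavity for a trapezoidal array of size `(n,m)` (entries `x i j`, `i ≤ n`,
`j ≤ i + m`). -/
def TrapSC (n m : ℕ) (x : ℕ → ℕ → ℝ) : Prop :=
  ∀ i j, 1 ≤ i → i ≤ n → 1 ≤ j → j ≤ i + m →
    (j ≤ i - 1 + m → pd x i j ≥ pd x (i - 1) j) ∧
    (j < i + m → pd x (i - 1) j ≥ pd x i (j + 1))

namespace TrapSC

variable {n m : ℕ} {x : ℕ → ℕ → ℝ}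

theorem of_succ (hsc : TrapSC (n + 1) m x) : TrapSC n m x :=
  fun i j hi hin ↦ hsc i j hi (by omega)

theorem pd_le_pd_succ (hsc : TrapSC (n + 1) m x) {j : ℕ} (hj : 1 ≤ j) (hjn : j ≤ n + m) :
    pd x n j ≤ pd x (n + 1) j :=
  (hsc (n + 1) j (by omega) le_rfl hj (by omega)).1 (by omega)

theorem pd_succ_succ_le_pd (hsc : TrapSC (n + 1) m x) {j : ℕ} (hj : 1 ≤ j)
    (hjn : j ≤ n + m) : pd x (n + 1) (j + 1) ≤ pd x n j :=
  (hsc (n + 1) j (by omega) le_rfl hj (by omega)).2 (by omega)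

end TrapSC

theorem sum_Ioc_pd (x : ℕ → ℕ → ℝ) (i : ℕ) {a b : ℕ} (hab : a ≤ b) :
    ∑ j ∈ Ioc a b, pd x i j = x i b - x i a := by
  induction b, hab using Nat.le_induction with
  | base => simp
  | succ b hab ih =>
    rw [sum_Ioc_succ_top hab, ih, pd, Nat.add_sub_cancel]
    ring

theorem sum_Ioc_pd_succ (x : ℕ → ℕ → ℝ) (i : ℕ) {a b : ℕ} (hab : a ≤ b) :
    ∑ j ∈ Ioc a b, pd x i (j + 1) = x i (b + 1) - x i (a + 1) := by
  rw [← sum_Ioc_pd x i (by omega : a + 1 ≤ b + 1), ← map_add_right_Ioc, sum_map]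
  rfl

theorem sum_Icc_comp_add_right (f : ℕ → ℝ) (a b k : ℕ) :
    ∑ t ∈ Icc a b, f (t + k) = ∑ j ∈ Icc (a + k) (b + k), f j := by
  rw [← map_add_right_Icc, sum_map]
  rfl

noncomputable def nu (x : ℕ → ℕ → ℝ) (m i : ℕ) : ℝ := x i (i + m) - x (i - 1) (i - 1 + m)

/-- The paper's `Δ_k` for `λ = λ^X` read off row `n`, reindexed by `t = j − k`; the terms
with `j − k ∉ [1, m]`, where `λ̄_{j−k} = −∞`, are dropped. -/
noncomputable def delta (x : ℕ → ℕ → ℝ) (n m k : ℕ) : ℝ :=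
  ∑ t ∈ Icc 1 m, max 0 (pd x 0 t - pd x n (t + k))

theorem delta_succ_le (m : ℕ) {n k : ℕ} {x : ℕ → ℕ → ℝ} (hsc : TrapSC (n + 1) m x)
    (hk : k ≤ n) : delta x (n + 1) m k ≤ delta x n m k := by
  refine sum_le_sum fun t ht ↦ max_le_max le_rfl ?_
  have := hsc.pd_le_pd_succ (j := t + k) (by simp at ht; omega) (by simp at ht; omega)
  linarith

theorem delta_succ_succ_sub_le (m : ℕ) {n k : ℕ} {x : ℕ → ℕ → ℝ}
    (hsc : TrapSC (n + 1) m x) (hk : k ≤ n) :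
    delta x (n + 1) m (k + 1) - delta x n m k ≤
      (x n (n + m) - x n k) - (x (n + 1) (n + 1 + m) - x (n + 1) (k + 1)) := by
  set g : ℕ → ℝ := fun j ↦ pd x n j - pd x (n + 1) (j + 1)
  have hg : ∀ j ∈ Ioc k (n + m), 0 ≤ g j := fun j hj ↦ by
    simp only [mem_Ioc] at hj
    simpa [g] using hsc.pd_succ_succ_le_pd (j := j) (by omega) (by omega)
  calc delta x (n + 1) m (k + 1) - delta x n m k
      ≤ ∑ t ∈ Icc 1 m, g (t + k) := by
        rw [delta, delta, ← sum_sub_distrib]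
        refine sum_le_sum fun t ht ↦ ?_
        have := hg (t + k) (by simp at ht ⊢; omega)
        simp only [g, ← add_assoc] at this ⊢
        -- `max 0 (a - c) ≤ max 0 (a - b) + (b - c)` once `c ≤ b`
        have := le_max_right 0 (pd x 0 t - pd x n (t + k))
        have := le_max_left 0 (pd x 0 t - pd x n (t + k))
        rw [sub_le_iff_le_add', max_le_iff]
        constructor <;> linarith
    _ = ∑ j ∈ Icc (1 + k) (m + k), g j := sum_Icc_comp_add_right g 1 m k
    _ ≤ ∑ j ∈ Ioc k (n + m), g j := by
        refine sum_le_sum_of_subset_of_nonneg (fun j hj ↦ ?_) fun j hj _ ↦ hg j hj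
        simp only [mem_Icc, mem_Ioc] at hj ⊢
        omega
    _ = _ := by
        rw [sum_sub_distrib, sum_Ioc_pd x n (by omega), sum_Ioc_pd_succ x (n + 1) (by omega),
          show n + m + 1 = n + 1 + m by omega]

theorem subset_Icc_of_notMem {I : Finset ℕ} {a b : ℕ} (hI : I ⊆ Icc a (b + 1))
    (hb : b + 1 ∉ I) : I ⊆ Icc a b := fun i hi ↦ by
  have := hI hi
  have : i ≠ b + 1 := fun h ↦ hb (h ▸ hi)
  simp only [mem_Icc] at *
  omega

theorem sum_nu_add_delta_le {n m : ℕ} {x : ℕ → ℕ → ℝ} (hsc : TrapSC n m x)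
    (hx0 : ∀ i ≤ n, x i 0 = 0) {I : Finset ℕ} (hI : I ⊆ Icc 1 n) :
    ∑ i ∈ I, nu x m i + delta x n m I.card ≤ x n I.card := by
  induction n generalizing I with
  | zero =>
    obtain rfl : I = ∅ := subset_empty.mp (by simpa using hI)
    simp [delta, pd, hx0]
  | succ n ih =>
    have ih := @ih hsc.of_succ fun i hi ↦ hx0 i (by omega)
    by_cases hmem : n + 1 ∈ I
    · obtain ⟨J, hJ, rfl⟩ : ∃ J, n + 1 ∉ J ∧ I = insert (n + 1) J :=
        ⟨I.erase (n + 1), notMem_erase _ _, (insert_erase hmem).symm⟩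
      have hJI := subset_Icc_of_notMem ((subset_insert _ J).trans hI) hJ
      have hk : J.card ≤ n := by simpa using card_le_card hJI
      rw [sum_insert hJ, card_insert_of_notMem hJ, nu, Nat.add_sub_cancel]
      linarith [ih hJI, delta_succ_succ_sub_le m hsc hk]
    · have hI' := subset_Icc_of_notMem hI hmem
      have hk : I.card ≤ n := by simpa using card_le_card hI'
      have hrow : x n I.card ≤ x (n + 1) I.card := by
        have : ∑ j ∈ Ioc 0 I.card, pd x n j ≤ ∑ j ∈ Ioc 0 I.card, pd x (n + 1) j :=
          sum_le_sum fun j hj ↦ hsc.pd_le_pd_succ (by simp at hj; omega)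
            (by simp at hj; omega)
        rwa [sum_Ioc_pd x n (Nat.zero_le _), sum_Ioc_pd x (n + 1) (Nat.zero_le _),
          hx0 n (by omega), hx0 (n + 1) le_rfl, sub_zero, sub_zero] at this
      linarith [ih hI', delta_succ_le m hsc hk]

theorem sum_Icc_ite_eq_sum (f : ℕ → ℝ) {k m N : ℕ} (h : m + k ≤ N) :
    ∑ j ∈ Icc 1 N, (if k < j ∧ j ≤ m + k then f j else 0) = ∑ t ∈ Icc 1 m, f (t + k) := by
  rw [sum_Icc_comp_add_right, ← sum_filter]
  congr 1
  ext j
  simp only [mem_filter, mem_Icc]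
  omega

/-- For a strip-concave trapezoidal array with `μ^X = 0`, for every `I ⊆ {1,…,n}` the
inequality `λ[1,|I|] − ν(I) − Δ_{|I|} ≥ 0` holds. -/
theorem stmt2 (n m : ℕ) (x : ℕ → ℕ → ℝ) (hsc : TrapSC n m x)
    (hx0 : ∀ i ≤ n, x i 0 = 0)
    (I : Finset ℕ) (hI : I ⊆ Icc 1 n) :
    (∑ j ∈ Icc 1 I.card, pd x n j) - (∑ i ∈ I, (x i (i + m) - x (i - 1) (i - 1 + m)))
      - (∑ j ∈ Icc 1 (n + m), if I.card < j ∧ j ≤ m + I.card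
          then max 0 (pd x 0 (j - I.card) - pd x n j) else 0) ≥ 0 := by
  have hk : I.card ≤ n := by simpa using card_le_card hI
  have hlam : ∑ j ∈ Icc 1 I.card, pd x n j = x n I.card := by
    rw [← zero_add 1, Icc_add_one_left_eq_Ioc, sum_Ioc_pd x n (Nat.zero_le _), hx0 n le_rfl,
      sub_zero]
  have hdelta : (∑ j ∈ Icc 1 (n + m), if I.card < j ∧ j ≤ m + I.card
      then max 0 (pd x 0 (j - I.card) - pd x n j) else 0) = delta x n m I.card := by
    rw [sum_Icc_ite_eq_sum _ (by omega), delta]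
    simp only [Nat.add_sub_cancel]
  have := sum_nu_add_delta_le hsc hx0 hI
  rw [hlam, hdelta]
  simp only [nu] at this
  linarith
end

section
/- Let n ≥ 1, let λ ∈ R^n be weakly decreasing with λ_1 + … + λ_n = ν_1 + … + ν_n for a given ν ∈ R^n, and suppose λ_1 + … + λ_{|I|} ≥ Σ_{i∈I} ν_i for every subset I ⊆ {1,…,n}. Then there exists a strip-concave triangular array X of size n with x_{i0} = 0 for all i, ∂x_{nj} = λ_j for j = 1,…,n, and x_{ii} − x_{i−1,i−1} = ν_i for i = 1,…,n. Moreover, if λ and ν are integer-valued then X can be chosen integer-valued. -/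
open Finset

/-- Strip-concavity for a triangular array of size `n` (entries `x i j`, `j ≤ i ≤ n`). -/
def TriSC (n : ℕ) (x : ℕ → ℕ → ℝ) : Prop :=
  ∀ i j, 1 ≤ i → i ≤ n → 1 ≤ j → j ≤ i →
    (j ≤ i - 1 → pd x i j ≥ pd x (i - 1) j) ∧
    (j < i → pd x (i - 1) j ≥ pd x i (j + 1))

/-!
The array is built row by row from the bottom: row `n` holds the partial sums of `λ`, and
row `i - 1` is obtained from row `i` by `x_{i-1,k} = min (x_{ik}, x_{i,k+1} - ν_i)`.
This step turns a concave row into one whose increments interlace with it, which is exactly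
strip-concavity. The majorization inequalities `∑_{i ∈ I} ν_i ≤ x_{m,|I|}` for `I ⊆ {1, …, m}`
pass from row `m + 1` to row `m` (apply them to `I` and to `I ∪ {m + 1}`), and they force
`x_{m,0} = 0` and `x_{m,m} = ν_1 + ⋯ + ν_m`. Since only `min` and subtraction are used, the
entries stay in any additive group containing the data.
-/

def RowConcave (m : ℕ) (f : ℕ → ℝ) : Prop :=
  ∀ k, k + 2 ≤ m → f (k + 2) - f (k + 1) ≤ f (k + 1) - f k

def minStep (c : ℝ) (f : ℕ → ℝ) (k : ℕ) : ℝ := min (f k) (f (k + 1) - c)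

section minStep

variable {f : ℕ → ℝ} {k : ℕ}

lemma minStep_succ_sub_le (c : ℝ) (hf : f (k + 2) - f (k + 1) ≤ f (k + 1) - f k) :
    minStep c f (k + 1) - minStep c f k ≤ f (k + 1) - f k := by
  unfold minStep; grind

lemma sub_le_minStep_succ_sub (c : ℝ) (hf : f (k + 2) - f (k + 1) ≤ f (k + 1) - f k) :
    f (k + 2) - f (k + 1) ≤ minStep c f (k + 1) - minStep c f k := by
  unfold minStep; grind

lemma rowConcave_minStep {m : ℕ} (c : ℝ) (hf : RowConcave (m + 1) f) :
    RowConcave m (minStep c f) := by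
  intro k hk
  calc minStep c f (k + 2) - minStep c f (k + 1) ≤ f (k + 2) - f (k + 1) :=
        minStep_succ_sub_le c (hf (k + 1) (by omega))
    _ ≤ minStep c f (k + 1) - minStep c f k := sub_le_minStep_succ_sub c (hf k (by omega))

lemma minStep_mem {G : AddSubgroup ℝ} {c : ℝ} (hk : f k ∈ G) (hk' : f (k + 1) ∈ G) (hc : c ∈ G) :
    minStep c f k ∈ G := by
  rcases min_choice (f k) (f (k + 1) - c) with h | h <;> rw [minStep, h]
  exacts [hk, G.sub_mem hk' hc]

end minStep

lemma triSC_of_minStep {n : ℕ} {x : ℕ → ℕ → ℝ} (c : ℕ → ℝ)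
    (hstep : ∀ i < n, x i = minStep (c (i + 1)) (x (i + 1)))
    (hconc : ∀ i ≤ n, RowConcave i (x i)) : TriSC n x := by
  intro i j hi hin hj hji
  obtain ⟨k, rfl⟩ : ∃ k, j = k + 1 := ⟨j - 1, by omega⟩
  obtain ⟨i, rfl⟩ : ∃ i', i = i' + 1 := ⟨i - 1, by omega⟩
  simp only [pd, add_tsub_cancel_right, hstep i hin]
  exact ⟨fun _ => minStep_succ_sub_le (c (i + 1)) (hconc (i + 1) hin k (by omega)),
    fun _ => sub_le_minStep_succ_sub (c (i + 1)) (hconc (i + 1) hin k (by omega))⟩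

structure IsAdmissibleRow (nu : ℕ → ℝ) (m : ℕ) (f : ℕ → ℝ) : Prop where
  zero : f 0 = 0
  concave : RowConcave m f
  top : f m = ∑ i ∈ Icc 1 m, nu i
  majorizes : ∀ I ⊆ Icc 1 m, ∑ i ∈ I, nu i ≤ f #I

lemma IsAdmissibleRow.minStep_succ {nu f : ℕ → ℝ} {m : ℕ} (h : IsAdmissibleRow nu (m + 1) f) :
    IsAdmissibleRow nu m (minStep (nu (m + 1)) f) where
  zero := by
    have h1 : nu (m + 1) ≤ f 1 := by
      simpa using h.majorizes {m + 1} (by simp)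
    simp only [minStep, h.zero, zero_add]
    exact min_eq_left (by linarith)
  concave := rowConcave_minStep _ h.concave
  top := by
    have hm : ∑ i ∈ Icc 1 m, nu i ≤ f m := by
      simpa using h.majorizes (Icc 1 m) (Icc_subset_Icc_right m.le_succ)
    have htop := h.top
    rw [sum_Icc_succ_top (Nat.le_add_left 1 m)] at htop
    rw [minStep, htop, min_eq_right (by linarith)]
    ring
  majorizes I hI := by
    have hmI : m + 1 ∉ I := fun hm => by simpa using hI hm
    have hI' : I ⊆ Icc 1 (m + 1) := hI.trans (Icc_subset_Icc_right m.le_succ)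
    have hins := h.majorizes (insert (m + 1) I) (insert_subset (by simp) hI')
    rw [sum_insert hmI, card_insert_of_notMem hmI] at hins
    exact le_min (h.majorizes I hI') (by linarith)

lemma isAdmissibleRow_partialSums {lam nu : ℕ → ℝ} {n : ℕ}
    (hdec : ∀ j, 1 ≤ j → j < n → lam (j + 1) ≤ lam j)
    (hsum : ∑ j ∈ Icc 1 n, lam j = ∑ i ∈ Icc 1 n, nu i)
    (hmaj : ∀ I : Finset ℕ, I ⊆ Icc 1 n → ∑ i ∈ I, nu i ≤ ∑ j ∈ Icc 1 I.card, lam j) :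
    IsAdmissibleRow nu n (fun k => ∑ j ∈ Icc 1 k, lam j) where
  zero := by simp
  concave k hk := by
    simp only [sum_Icc_succ_top (Nat.le_add_left 1 _), add_assoc, Nat.reduceAdd]
    linarith [hdec (k + 1) (by omega) (by omega)]
  top := hsum
  majorizes := hmaj

noncomputable def greedyArray (lam nu : ℕ → ℝ) (n i : ℕ) : ℕ → ℝ :=
  if n ≤ i then fun k => ∑ j ∈ Icc 1 k, lam j
  else minStep (nu (i + 1)) (greedyArray lam nu n (i + 1))
termination_by n - i

section greedyArray

variable {lam nu : ℕ → ℝ} {n i : ℕ}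

lemma greedyArray_of_le (h : n ≤ i) : greedyArray lam nu n i = fun k => ∑ j ∈ Icc 1 k, lam j := by
  rw [greedyArray, if_pos h]

lemma greedyArray_of_lt (h : i < n) :
    greedyArray lam nu n i = minStep (nu (i + 1)) (greedyArray lam nu n (i + 1)) := by
  rw [greedyArray, if_neg h.not_ge]

lemma isAdmissibleRow_greedyArray (hdec : ∀ j, 1 ≤ j → j < n → lam (j + 1) ≤ lam j)
    (hsum : ∑ j ∈ Icc 1 n, lam j = ∑ i ∈ Icc 1 n, nu i)
    (hmaj : ∀ I : Finset ℕ, I ⊆ Icc 1 n → ∑ i ∈ I, nu i ≤ ∑ j ∈ Icc 1 I.card, lam j)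
    (hi : i ≤ n) : IsAdmissibleRow nu i (greedyArray lam nu n i) := by
  induction hi using Nat.decreasingInduction with
  | self => rw [greedyArray_of_le le_rfl]; exact isAdmissibleRow_partialSums hdec hsum hmaj
  | of_succ k hk ih => rw [greedyArray_of_lt hk]; exact ih.minStep_succ

lemma greedyArray_mem {G : AddSubgroup ℝ} (hlam : ∀ j, 1 ≤ j → j ≤ n → lam j ∈ G)
    (hnu : ∀ i, 1 ≤ i → i ≤ n → nu i ∈ G) (hi : i ≤ n) :
    ∀ k ≤ i, greedyArray lam nu n i k ∈ G := by
  induction hi using Nat.decreasingInduction with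
  | self =>
    intro k hk
    rw [greedyArray_of_le le_rfl]
    exact G.sum_mem fun j hj => hlam j (mem_Icc.1 hj).1 ((mem_Icc.1 hj).2.trans hk)
  | of_succ m hm ih =>
    intro k hk
    rw [greedyArray_of_lt hm]
    exact minStep_mem (ih k (by omega)) (ih (k + 1) (by omega)) (hnu (m + 1) (by omega) hm)

lemma pd_greedyArray_self {j : ℕ} (hj : 1 ≤ j) : pd (greedyArray lam nu n) n j = lam j := by
  obtain ⟨k, rfl⟩ : ∃ k, j = k + 1 := ⟨j - 1, by omega⟩
  simp only [pd, greedyArray_of_le le_rfl, add_tsub_cancel_right,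
    sum_Icc_succ_top (Nat.le_add_left 1 k), add_sub_cancel_left]

end greedyArray

theorem stmt3_general (n : ℕ) (lam nu : ℕ → ℝ)
    (hdec : ∀ j, 1 ≤ j → j < n → lam (j + 1) ≤ lam j)
    (hsum : ∑ j ∈ Icc 1 n, lam j = ∑ i ∈ Icc 1 n, nu i)
    (hmaj : ∀ I : Finset ℕ, I ⊆ Icc 1 n → ∑ i ∈ I, nu i ≤ ∑ j ∈ Icc 1 I.card, lam j) :
    (∃ x : ℕ → ℕ → ℝ, TriSC n x ∧ (∀ i ≤ n, x i 0 = 0) ∧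
      (∀ j, 1 ≤ j → j ≤ n → pd x n j = lam j) ∧
      (∀ i, 1 ≤ i → i ≤ n → x i i - x (i - 1) (i - 1) = nu i)) ∧
    ((∀ j, 1 ≤ j → j ≤ n → ∃ z : ℤ, lam j = z) →
     (∀ i, 1 ≤ i → i ≤ n → ∃ z : ℤ, nu i = z) →
      ∃ x : ℕ → ℕ → ℝ, TriSC n x ∧ (∀ i ≤ n, x i 0 = 0) ∧
        (∀ j, 1 ≤ j → j ≤ n → pd x n j = lam j) ∧
        (∀ i, 1 ≤ i → i ≤ n → x i i - x (i - 1) (i - 1) = nu i) ∧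
        (∀ i j, j ≤ i → i ≤ n → ∃ z : ℤ, x i j = z)) := by
  have hrow (i : ℕ) (hi : i ≤ n) := isAdmissibleRow_greedyArray hdec hsum hmaj hi
  have hsc : TriSC n (greedyArray lam nu n) :=
    triSC_of_minStep nu (fun _ hi => greedyArray_of_lt hi) (fun i hi => (hrow i hi).concave)
  have hdiag (i : ℕ) (hi : 1 ≤ i) (hin : i ≤ n) :
      greedyArray lam nu n i i - greedyArray lam nu n (i - 1) (i - 1) = nu i := by
    obtain ⟨k, rfl⟩ : ∃ k, i = k + 1 := ⟨i - 1, by omega⟩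
    rw [(hrow _ hin).top, add_tsub_cancel_right, (hrow k (by omega)).top,
      sum_Icc_succ_top (Nat.le_add_left 1 k), add_sub_cancel_left]
  have hzero (i : ℕ) (hi : i ≤ n) : greedyArray lam nu n i 0 = 0 := (hrow i hi).zero
  have hpd (j : ℕ) (hj : 1 ≤ j) (_ : j ≤ n) : pd (greedyArray lam nu n) n j = lam j :=
    pd_greedyArray_self hj
  refine ⟨⟨_, hsc, hzero, hpd, hdiag⟩,
    fun hlam hnu => ⟨_, hsc, hzero, hpd, hdiag, fun i j hji hin => ?_⟩⟩
  have hZ (y : ℝ) : (∃ z : ℤ, y = z) ↔ y ∈ (Int.castAddHom ℝ).range := by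
    simp only [AddMonoidHom.mem_range, Int.coe_castAddHom, eq_comm]
  exact (hZ _).2 <| greedyArray_mem (fun j hj hjn => (hZ _).1 (hlam j hj hjn))
    (fun i hi hin => (hZ _).1 (hnu i hi hin)) hin j hji

/-- Triangular existence theorem: if `λ` is weakly decreasing, `|λ| = |ν|` and the
majorization inequalities hold, then a strip-concave triangular array with the prescribed
boundary data exists; moreover, if `λ, ν` are integral then it may be chosen integral. -/
theorem stmt3 (n : ℕ) (hn : 1 ≤ n) (lam nu : ℕ → ℝ)
    (hdec : ∀ j, 1 ≤ j → j < n → lam (j + 1) ≤ lam j)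
    (hsum : ∑ j ∈ Icc 1 n, lam j = ∑ i ∈ Icc 1 n, nu i)
    (hmaj : ∀ I : Finset ℕ, I ⊆ Icc 1 n → ∑ i ∈ I, nu i ≤ ∑ j ∈ Icc 1 I.card, lam j) :
    (∃ x : ℕ → ℕ → ℝ, TriSC n x ∧ (∀ i ≤ n, x i 0 = 0) ∧
      (∀ j, 1 ≤ j → j ≤ n → pd x n j = lam j) ∧
      (∀ i, 1 ≤ i → i ≤ n → x i i - x (i - 1) (i - 1) = nu i)) ∧
    ((∀ j, 1 ≤ j → j ≤ n → ∃ z : ℤ, lam j = z) →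
     (∀ i, 1 ≤ i → i ≤ n → ∃ z : ℤ, nu i = z) →
      ∃ x : ℕ → ℕ → ℝ, TriSC n x ∧ (∀ i ≤ n, x i 0 = 0) ∧
        (∀ j, 1 ≤ j → j ≤ n → pd x n j = lam j) ∧
        (∀ i, 1 ≤ i → i ≤ n → x i i - x (i - 1) (i - 1) = nu i) ∧
        (∀ i j, j ≤ i → i ≤ n → ∃ z : ℤ, x i j = z)) :=
  stmt3_general n lam nu hdec hsum hmaj
end

section
/- Let n ≥ 1, m ≥ 0, let λ ∈ R^{n+m} and λ̄ ∈ R^m be weakly decreasing, and ν ∈ R^n with |λ| − |λ̄| − |ν| = 0. Then there exists a strip-concave trapezoidal array X of size (n,m) with x_{i0} = 0 for all i, λ^X = λ, λ̄^X = λ̄ and ν^X = ν if and only if for every subset I ⊆ {1,…,n}, λ[1,|I|] − ν(I) − Δ_{|I|} ≥ 0, where Δ_k := Σ_{j=1}^{n+m} max{0, λ̄_{j−k} − λ_j} with the term taken as 0 whenever j−k ≤ 0 or j−k > m. -/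
open Finset

/-!
Both sides are peeled off one row at a time, by induction on `n`. An array of size `(n+1, m)` is
an array of size `(n, m)` whose last row `μ` interlaces `λ` (`λ_{j+1} ≤ μ_j ≤ λ_j`) and has
`|λ| − |μ| = ν_{n+1}`. Writing `capacity λ k = λ[1,k] − Δ_k + |λ̄|`, the deficit inequalities say
`ν(I) + |λ̄| ≤ capacity λ |I|`. Interlacing makes the capacity monotone in the row and gives
`capacity μ k + ν_{n+1} ≤ capacity λ (k+1)`, hence necessity.

For sufficiency, shifting `λ̄` right by `r` and clamping it into the intervals `[λ_{j+1}, λ_j]`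
gives an interlacing row `μ_r` with `|λ| − |μ_r| = D_r := capacity λ (r+1) − capacity λ r`, whose
capacity is at least `capacity λ k` for `k ≤ r` and equal to `capacity λ (k+1) − D_r` for `k > r`.
The deficit inequalities for `I = {n+1}` and `I = {1,…,n}` give `D_n ≤ ν_{n+1} ≤ D_0`, so
`ν_{n+1}` lies between `D_{r+1}` and `D_r` for some `r` (or equals `D_n`). The capacity being
concave in the row, the matching convex combination of `μ_r` and `μ_{r+1}` is a last row for which
the deficit inequalities of the smaller array follow from those for `I` and for `I ∪ {n+1}`.
-/

namespace TrapezoidalArray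

noncomputable def prefixSum (f : ℕ → ℝ) (k : ℕ) : ℝ := ∑ j ∈ Ioc 0 k, f j

@[simp] lemma prefixSum_zero (f : ℕ → ℝ) : prefixSum f 0 = 0 := by simp [prefixSum]

lemma prefixSum_succ (f : ℕ → ℝ) (k : ℕ) : prefixSum f (k + 1) = prefixSum f k + f (k + 1) :=
  sum_Ioc_succ_top (Nat.zero_le k) f

lemma prefixSum_sub_pred (f : ℕ → ℝ) {j : ℕ} (hj : 1 ≤ j) :
    prefixSum f j - prefixSum f (j - 1) = f j := by
  obtain ⟨i, rfl⟩ := Nat.exists_eq_add_of_le' hj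
  rw [prefixSum_succ, Nat.add_sub_cancel]; ring

lemma sum_Icc_one_eq_prefixSum (f : ℕ → ℝ) (k : ℕ) : ∑ j ∈ Icc 1 k, f j = prefixSum f k := by
  rw [prefixSum, ← Icc_add_one_left_eq_Ioc, zero_add]

lemma prefixSum_congr {f g : ℕ → ℝ} {k : ℕ} (h : ∀ j, 1 ≤ j → j ≤ k → f j = g j) :
    prefixSum f k = prefixSum g k :=
  sum_congr rfl fun j hj => by rw [mem_Ioc] at hj; exact h j hj.1 hj.2

lemma sum_Ioc_eq_prefixSum_sub (f : ℕ → ℝ) {a b : ℕ} (hab : a ≤ b) :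
    ∑ j ∈ Ioc a b, f j = prefixSum f b - prefixSum f a := by
  rw [prefixSum, prefixSum, ← sum_Ioc_consecutive f (Nat.zero_le a) hab]; ring

lemma sum_Ioc_succ_eq_prefixSum_sub (f : ℕ → ℝ) {a b : ℕ} (hab : a ≤ b) :
    ∑ j ∈ Ioc a b, f (j + 1) = prefixSum f (b + 1) - prefixSum f (a + 1) := by
  rw [← sum_Ioc_eq_prefixSum_sub f (by omega), ← map_add_right_Ioc, sum_map]; rfl

lemma sum_Ioc_window (f : ℕ → ℝ) (k m : ℕ) :
    ∑ j ∈ Ioc k (k + m), f j = ∑ s ∈ Ioc 0 m, f (k + s) := by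
  have h := map_add_left_Ioc 0 m k
  rw [add_zero] at h
  rw [← h, sum_map]; rfl

lemma prefixSum_add (f : ℕ → ℝ) (a b : ℕ) :
    prefixSum f (a + b) = prefixSum f a + ∑ s ∈ Ioc 0 b, f (a + s) := by
  rw [← sum_Ioc_window, sum_Ioc_eq_prefixSum_sub f (Nat.le_add_right a b)]; ring

lemma prefixSum_smul_add_smul (a b : ℝ) (f g : ℕ → ℝ) (k : ℕ) :
    prefixSum (a • f + b • g) k = a * prefixSum f k + b * prefixSum g k := by
  simp [prefixSum, sum_add_distrib, mul_sum]

lemma card_le_of_subset_Icc {I : Finset ℕ} {n : ℕ} (hI : I ⊆ Icc 1 n) : I.card ≤ n := by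
  simpa using card_le_card hI

lemma exists_le_and_succ_lt {α : Type*} [LinearOrder α] (D : ℕ → α) {v : α} (n : ℕ)
    (h0 : v ≤ D 0) : ∃ r ≤ n, v ≤ D r ∧ (r < n → D (r + 1) < v) := by
  classical
  refine ⟨Nat.findGreatest (fun r => v ≤ D r) n, Nat.findGreatest_le n,
    Nat.findGreatest_spec (P := fun r => v ≤ D r) (Nat.zero_le n) h0, fun hr => not_le.1 ?_⟩
  exact Nat.findGreatest_is_greatest (Nat.lt_succ_self _) hr

section RealInequalities

variable {a b c x y : ℝ}

lemma min_add_sub_le_min (hyx : y ≤ x) : min x c + (y - x) ≤ min y c := by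
  simp only [min_def]; split_ifs <;> linarith

lemma max_min_sub_eq (hyx : y ≤ x) : max y (min x c) - y = min x c - min y c := by
  simp only [min_def, max_def]; split_ifs <;> linarith

lemma min_max_eq (hb : b ≤ c) : min (max y b) c = max y b - y + min y c := by
  simp only [min_def, max_def]; split_ifs <;> linarith

lemma mul_min_add_mul_min_le (ha : 0 ≤ a) (hb : 0 ≤ b) (hab : a + b = 1) :
    a * min x c + b * min y c ≤ min (a * x + b * y) c := by
  refine le_min (by gcongr <;> exact min_le_left _ _) ?_
  calc a * min x c + b * min y c ≤ a * c + b * c := by gcongr <;> exact min_le_right _ _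
    _ = c := by linear_combination c * hab

end RealInequalities

/-- Strip-concavity between a row `μ` of length `N` and the row `λ` below it. -/
def Interlaces (N : ℕ) (μ lam : ℕ → ℝ) : Prop :=
  ∀ j, 1 ≤ j → j ≤ N → lam (j + 1) ≤ μ j ∧ μ j ≤ lam j

lemma Interlaces.antitone {N : ℕ} {μ lam : ℕ → ℝ} (h : Interlaces N μ lam) :
    ∀ j, 1 ≤ j → j < N → μ (j + 1) ≤ μ j :=
  fun j hj hjN => (h (j + 1) (by omega) hjN).2.trans (h j hj hjN.le).1

noncomputable def window (m : ℕ) (c f : ℕ → ℝ) (k : ℕ) : ℝ :=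
  ∑ s ∈ Ioc 0 m, min (f (k + s)) (c s)

/-- `capacity m λ̄ λ k = λ[1,k] − Δ_k + |λ̄|` (see `sum_deficit_eq`). -/
noncomputable def capacity (m : ℕ) (c f : ℕ → ℝ) (k : ℕ) : ℝ :=
  prefixSum f k + window m c f k

section Capacity

variable {m : ℕ} {c f g : ℕ → ℝ}

lemma capacity_mono {k : ℕ} (h : ∀ j, 1 ≤ j → j ≤ k + m → f j ≤ g j) :
    capacity m c f k ≤ capacity m c g k := by
  unfold capacity window prefixSum
  gcongr with j hj s hs
  · rw [mem_Ioc] at hj; exact h j hj.1 (by omega)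
  · rw [mem_Ioc] at hs; exact h _ (by omega) (by omega)

lemma capacity_le_prefixSum (k : ℕ) : capacity m c f k ≤ prefixSum f (k + m) := by
  rw [capacity, prefixSum_add, window]
  gcongr with s
  exact min_le_left _ _

lemma capacity_zero_le (f : ℕ → ℝ) : capacity m c f 0 ≤ prefixSum c m := by
  rw [capacity, prefixSum_zero, zero_add, window, prefixSum]
  gcongr with s
  exact min_le_right _ _

lemma capacity_add_le_capacity_succ {N k : ℕ} (hfg : Interlaces N f g) (hk : k + m ≤ N) :
    capacity m c f k + (prefixSum g (N + 1) - prefixSum f N) ≤ capacity m c g (k + 1) := by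
  have hg := sum_Ioc_succ_eq_prefixSum_sub g (show k ≤ N by omega)
  have hf := sum_Ioc_eq_prefixSum_sub f (show k ≤ N by omega)
  have htail : ∑ j ∈ Ioc (k + m) N, (g (j + 1) - f j) ≤ 0 :=
    sum_nonpos fun j hj => by
      rw [mem_Ioc] at hj; linarith [(hfg j (by omega) hj.2).1]
  have hwin : window m c f k + ∑ j ∈ Ioc k (k + m), (g (j + 1) - f j) ≤ window m c g (k + 1) := by
    rw [sum_Ioc_window, window, window, ← sum_add_distrib]
    gcongr with s hs
    rw [mem_Ioc] at hs
    rw [show k + 1 + s = k + s + 1 by ring]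
    exact min_add_sub_le_min (hfg _ (by omega) (by omega)).1
  rw [← sum_Ioc_consecutive _ (Nat.le_add_right k m) hk] at hg hf
  rw [sum_sub_distrib] at htail hwin
  rw [capacity, capacity]
  linarith

lemma smul_capacity_add_smul_capacity_le {a b : ℝ} (ha : 0 ≤ a) (hb : 0 ≤ b) (hab : a + b = 1)
    (k : ℕ) : a * capacity m c f k + b * capacity m c g k ≤ capacity m c (a • f + b • g) k := by
  simp only [capacity, window, prefixSum_smul_add_smul, mul_add, mul_sum, Pi.add_apply,
    Pi.smul_apply, smul_eq_mul]
  have := sum_le_sum fun s (_ : s ∈ Ioc 0 m) =>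
    mul_min_add_mul_min_le (x := f (k + s)) (y := g (k + s)) (c := c s) ha hb hab
  rw [sum_add_distrib] at this
  linarith

end Capacity

def DeficitIneqs (n m : ℕ) (lam lamb nu : ℕ → ℝ) : Prop :=
  ∀ I ⊆ Icc 1 n, ∑ i ∈ I, nu i + prefixSum lamb m ≤ capacity m lamb lam I.card

def Realizable (n m : ℕ) (lam lamb nu : ℕ → ℝ) : Prop :=
  ∃ x : ℕ → ℕ → ℝ, TrapSC n m x ∧ (∀ i ≤ n, x i 0 = 0) ∧
      (∀ j, 1 ≤ j → j ≤ n + m → pd x n j = lam j) ∧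
      (∀ j, 1 ≤ j → j ≤ m → pd x 0 j = lamb j) ∧
      (∀ i, 1 ≤ i → i ≤ n → x i (i + m) - x (i - 1) (i - 1 + m) = nu i)

section Rows

variable {n m : ℕ} {lam lamb nu : ℕ → ℝ}

lemma row_eq_prefixSum {x : ℕ → ℕ → ℝ} {i : ℕ} (h : x i 0 = 0) (q : ℕ) :
    x i q = prefixSum (pd x i) q := by
  induction q with
  | zero => simpa using h
  | succ q ih => rw [prefixSum_succ, ← ih, pd, Nat.add_sub_cancel]; ring

lemma realizable_zero_iff : Realizable 0 m lam lamb nu ↔ ∀ j, 1 ≤ j → j ≤ m → lam j = lamb j := by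
  constructor
  · rintro ⟨x, -, -, hbot, htop, -⟩ j hj hjm
    rw [← hbot j hj (by omega), htop j hj hjm]
  · intro h
    refine ⟨fun _ => prefixSum lamb, fun i j hi hin => absurd hin (by omega),
      fun _ _ => prefixSum_zero _, fun j hj hjm => ?_, fun j hj _ => prefixSum_sub_pred _ hj,
      fun i hi hin => absurd hin (by omega)⟩
    rw [pd, prefixSum_sub_pred _ hj, h j hj (by omega)]

lemma exists_interlaces_of_realizable_succ (h : Realizable (n + 1) m lam lamb nu) :
    ∃ μ, Interlaces (n + m) μ lam ∧
      prefixSum μ (n + m) + nu (n + 1) = prefixSum lam (n + 1 + m) ∧ Realizable n m μ lamb nu := by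
  obtain ⟨x, hsc, hx0, hbot, htop, hnu⟩ := h
  refine ⟨pd x n, fun j hj hjn => ?_, ?_, x, fun i j hi hin => hsc i j hi (by omega),
    fun i hi => hx0 i (by omega), fun _ _ _ => rfl, htop, fun i hi hin => hnu i hi (by omega)⟩
  · have h := hsc (n + 1) j (by omega) le_rfl hj (by omega)
    rw [Nat.add_sub_cancel, hbot j hj (by omega), hbot (j + 1) (by omega) (by omega)] at h
    exact ⟨h.2 (by omega), h.1 (by omega)⟩
  · have h := hnu (n + 1) (by omega) le_rfl
    rw [Nat.add_sub_cancel, row_eq_prefixSum (hx0 _ le_rfl), row_eq_prefixSum (hx0 n (by omega)),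
      prefixSum_congr fun j hj hjn => hbot j hj hjn] at h
    linarith

lemma realizable_succ_of_interlaces {μ : ℕ → ℝ} (hμ : Interlaces (n + m) μ lam)
    (hsum : prefixSum μ (n + m) + nu (n + 1) = prefixSum lam (n + 1 + m))
    (h : Realizable n m μ lamb nu) : Realizable (n + 1) m lam lamb nu := by
  obtain ⟨x, hsc, hx0, hbot, htop, hnu⟩ := h
  set y : ℕ → ℕ → ℝ := fun i => if i ≤ n then x i else prefixSum lam
  have hup : ∀ i ≤ n, y i = x i := fun i hi => if_pos hi
  have hlastrow : y (n + 1) = prefixSum lam := if_neg (by omega)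
  have hlast : ∀ j, 1 ≤ j → pd y (n + 1) j = lam j := fun j hj => by
    rw [pd, hlastrow]; exact prefixSum_sub_pred _ hj
  refine ⟨y, fun i j hi hin hj hjm => ?_, fun i hi => ?_, fun j hj _ => hlast j hj, ?_,
    fun i hi hin => ?_⟩
  · rcases Nat.lt_or_ge n i with hni | hin'
    · obtain rfl : i = n + 1 := by omega
      have hrow : j ≤ n + m → pd y n j = μ j := fun hjn => by
        rw [pd, hup n le_rfl, ← pd]; exact hbot j hj hjn
      rw [Nat.add_sub_cancel, hlast j hj, hlast (j + 1) (by omega)]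
      refine ⟨fun hjn => ?_, fun hjn => ?_⟩
      · rw [hrow hjn]; exact (hμ j hj hjn).2
      · rw [hrow (by omega)]; exact (hμ j hj (by omega)).1
    · simpa only [pd, hup i hin', hup (i - 1) (by omega)] using hsc i j hi hin' hj hjm
  · rcases Nat.lt_or_ge n i with hni | hin'
    · obtain rfl : i = n + 1 := by omega
      rw [hlastrow, prefixSum_zero]
    · rw [hup i hin']; exact hx0 i hin'
  · simpa only [pd, hup 0 (Nat.zero_le n)] using htop
  · rcases Nat.lt_or_ge n i with hni | hin'
    · obtain rfl : i = n + 1 := by omega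
      rw [Nat.add_sub_cancel, hup n le_rfl, row_eq_prefixSum (hx0 n le_rfl),
        prefixSum_congr fun j hj hjn => hbot j hj hjn, hlastrow]
      linarith
    · rw [hup i hin', hup (i - 1) (by omega)]; exact hnu i hi hin'

lemma realizable_succ_iff : Realizable (n + 1) m lam lamb nu ↔
    ∃ μ, Interlaces (n + m) μ lam ∧
      prefixSum μ (n + m) + nu (n + 1) = prefixSum lam (n + 1 + m) ∧ Realizable n m μ lamb nu :=
  ⟨exists_interlaces_of_realizable_succ, fun ⟨_, hμ, hsum, h⟩ =>
    realizable_succ_of_interlaces hμ hsum h⟩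

end Rows

section Deficit

variable {n m : ℕ} {lam lamb nu μ : ℕ → ℝ}

lemma deficitIneqs_zero_iff (hsum : prefixSum lam m = prefixSum lamb m) :
    DeficitIneqs 0 m lam lamb nu ↔ ∀ j, 1 ≤ j → j ≤ m → lam j = lamb j := by
  have hcap : capacity m lamb lam 0 = ∑ s ∈ Ioc 0 m, min (lam s) (lamb s) := by
    simp [capacity, window]
  have hle : ∀ s ∈ Ioc 0 m, min (lam s) (lamb s) ≤ lam s := fun _ _ => min_le_left _ _
  have hle' : ∀ s ∈ Ioc 0 m, min (lam s) (lamb s) ≤ lamb s := fun _ _ => min_le_right _ _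
  constructor
  · intro h j hj hjm
    have h0 := h ∅ (empty_subset _)
    rw [sum_empty, zero_add, card_empty, hcap] at h0
    rw [prefixSum] at hsum h0
    have hj' : j ∈ Ioc 0 m := mem_Ioc.2 ⟨hj, hjm⟩
    rw [← (sum_eq_sum_iff_of_le hle).1 ((sum_le_sum hle).antisymm (hsum ▸ h0)) j hj',
      (sum_eq_sum_iff_of_le hle').1 ((sum_le_sum hle').antisymm h0) j hj']
  · intro h I hI
    rw [show I = ∅ from subset_empty.1 (by simpa using hI), sum_empty, zero_add, card_empty, hcap,
      prefixSum]
    refine (sum_congr rfl fun s hs => ?_).le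
    rw [mem_Ioc] at hs
    rw [h s hs.1 hs.2, min_self]

lemma deficitIneqs_succ (hμ : Interlaces (n + m) μ lam)
    (hsum : prefixSum μ (n + m) + nu (n + 1) = prefixSum lam (n + 1 + m))
    (h : DeficitIneqs n m μ lamb nu) : DeficitIneqs (n + 1) m lam lamb nu := by
  intro I hI
  have hJ : I.erase (n + 1) ⊆ Icc 1 n := by
    rwa [← subset_insert_iff, insert_Icc_right_eq_Icc_add_one (by omega)]
  by_cases hmem : n + 1 ∈ I
  · rw [← insert_erase hmem, sum_insert (notMem_erase _ _),
      card_insert_of_notMem (notMem_erase _ _)]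
    have hstep := capacity_add_le_capacity_succ (m := m) (c := lamb) (N := n + m) hμ
      (k := (I.erase (n + 1)).card) (by linarith [card_le_of_subset_Icc hJ])
    rw [show n + 1 + m = n + m + 1 by ring] at hsum
    linarith [h _ hJ]
  · rw [erase_eq_of_notMem hmem] at hJ
    exact (h I hJ).trans <| capacity_mono fun j hj hjk =>
      (hμ j hj (by linarith [card_le_of_subset_Icc hJ])).2

end Deficit

section Candidate

variable {m r : ℕ} {lam lamb : ℕ → ℝ}

/-- The row obtained by shifting `λ̄` right by `r` and clamping it into the interlacing intervals
`[λ_{j+1}, λ_j]` (the shifted `λ̄` being `+∞` before position `r` and `−∞` after `r + m`). -/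
noncomputable def candidate (m : ℕ) (lam lamb : ℕ → ℝ) (r j : ℕ) : ℝ :=
  if j ≤ r then lam j
  else if j ≤ r + m then max (lam (j + 1)) (min (lam j) (lamb (j - r)))
  else lam (j + 1)

lemma candidate_interlaces {N : ℕ} (hlam : ∀ j, 1 ≤ j → j ≤ N → lam (j + 1) ≤ lam j) :
    Interlaces N (candidate m lam lamb r) lam := by
  intro j hj hjN
  have h := hlam j hj hjN
  unfold candidate
  split_ifs
  exacts [⟨h, le_rfl⟩, ⟨le_max_left _ _, max_le h (min_le_left _ _)⟩, ⟨le_rfl, h⟩]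

lemma prefixSum_candidate_of_le {k : ℕ} (hkr : k ≤ r) :
    prefixSum (candidate m lam lamb r) k = prefixSum lam k :=
  prefixSum_congr fun _ _ hj => if_pos (by omega)

lemma sum_candidate_sub {t : ℕ} (hlam : ∀ j, 1 ≤ j → j ≤ r + m → lam (j + 1) ≤ lam j)
    (ht : r + m ≤ t) :
    ∑ j ∈ Ioc r t, (candidate m lam lamb r j - lam (j + 1))
      = window m lamb lam r - window m lamb lam (r + 1) := by
  have htail : ∑ j ∈ Ioc (r + m) t, (candidate m lam lamb r j - lam (j + 1)) = 0 :=
    sum_eq_zero fun j hj => by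
      rw [mem_Ioc] at hj
      rw [candidate, if_neg (by omega), if_neg (by omega), sub_self]
  rw [← sum_Ioc_consecutive _ (Nat.le_add_right r m) ht, htail, add_zero, sum_Ioc_window, window,
    window, ← sum_sub_distrib]
  refine sum_congr rfl fun s hs => ?_
  rw [mem_Ioc] at hs
  rw [candidate, if_neg (by omega), if_pos (by omega), Nat.add_sub_cancel_left,
    max_min_sub_eq (hlam _ (by omega) (by omega)), show r + 1 + s = r + s + 1 by ring]

lemma prefixSum_candidate {t : ℕ} (hrt : r ≤ t) :
    prefixSum (candidate m lam lamb r) t = prefixSum lam r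
      + (prefixSum lam (t + 1) - prefixSum lam (r + 1))
      + ∑ j ∈ Ioc r t, (candidate m lam lamb r j - lam (j + 1)) := by
  rw [sum_sub_distrib, sum_Ioc_succ_eq_prefixSum_sub lam hrt, sum_Ioc_eq_prefixSum_sub _ hrt,
    prefixSum_candidate_of_le le_rfl]
  ring

lemma prefixSum_candidate_add {n : ℕ} (hlam : ∀ j, 1 ≤ j → j ≤ n + m → lam (j + 1) ≤ lam j)
    (hr : r ≤ n) :
    prefixSum (candidate m lam lamb r) (n + m)
      + (capacity m lamb lam (r + 1) - capacity m lamb lam r) = prefixSum lam (n + 1 + m) := by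
  rw [prefixSum_candidate (by omega), sum_candidate_sub (fun j hj hjr => hlam j hj (by omega))
    (by omega), capacity, capacity, show n + 1 + m = n + m + 1 by ring]
  ring

lemma capacity_le_capacity_candidate (hlamb : AntitoneOn lamb (Set.Icc 1 m)) {k : ℕ}
    (hkr : k ≤ r) : capacity m lamb lam k ≤ capacity m lamb (candidate m lam lamb r) k := by
  rw [capacity, capacity, prefixSum_candidate_of_le hkr, window, window]
  refine add_le_add le_rfl (sum_le_sum fun s hs => le_min ?_ (min_le_right _ _))
  rw [mem_Ioc] at hs
  unfold candidate
  split_ifs with h₁ h₂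
  · exact min_le_left _ _
  · apply le_max_of_le_right
    apply min_le_min_left
    exact hlamb ⟨by omega, by omega⟩ ⟨by omega, by omega⟩ (by omega)
  · omega

lemma min_candidate (hlamb : AntitoneOn lamb (Set.Icc 1 m)) {k s : ℕ} (hrk : r < k)
    (hs : s ∈ Ioc 0 m) :
    min (candidate m lam lamb r (k + s)) (lamb s)
      = candidate m lam lamb r (k + s) - lam (k + s + 1) + min (lam (k + s + 1)) (lamb s) := by
  rw [mem_Ioc] at hs
  unfold candidate
  split_ifs with h₁ h₂
  · omega
  · exact min_max_eq ((min_le_right _ _).trans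
      (hlamb ⟨by omega, by omega⟩ ⟨by omega, by omega⟩ (by omega)))
  · ring

lemma capacity_candidate_of_lt (hlam : ∀ j, 1 ≤ j → j ≤ r + m → lam (j + 1) ≤ lam j)
    (hlamb : AntitoneOn lamb (Set.Icc 1 m)) {k : ℕ} (hrk : r < k) :
    capacity m lamb (candidate m lam lamb r) k
      = capacity m lamb lam r + capacity m lamb lam (k + 1) - capacity m lamb lam (r + 1) := by
  have hwin : window m lamb (candidate m lam lamb r) k
      = ∑ j ∈ Ioc k (k + m), (candidate m lam lamb r j - lam (j + 1))
        + window m lamb lam (k + 1) := by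
    rw [window, window, sum_Ioc_window, ← sum_add_distrib]
    refine sum_congr rfl fun s hs => ?_
    rw [min_candidate hlamb hrk hs, show k + 1 + s = k + s + 1 by ring]
  have hexcess := sum_candidate_sub (lamb := lamb) (t := k + m) hlam (by omega)
  rw [← sum_Ioc_consecutive _ hrk.le (Nat.le_add_right k m)] at hexcess
  rw [capacity, prefixSum_candidate hrk.le, hwin, capacity, capacity, capacity]
  linarith

lemma capacity_succ_sub_le_capacity_candidate
    (hlam : ∀ j, 1 ≤ j → j ≤ r + m → lam (j + 1) ≤ lam j)
    (hlamb : AntitoneOn lamb (Set.Icc 1 m)) {k : ℕ} (hrk : r ≤ k) :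
    capacity m lamb lam (k + 1) - (capacity m lamb lam (r + 1) - capacity m lamb lam r)
      ≤ capacity m lamb (candidate m lam lamb r) k := by
  rcases hrk.lt_or_eq with hrk | rfl
  · rw [capacity_candidate_of_lt hlam hlamb hrk]; linarith
  · linarith [capacity_le_capacity_candidate (lam := lam) hlamb (le_refl r)]

end Candidate

section Admissible

variable {n m : ℕ} {lam lamb nu : ℕ → ℝ}

/-- The capacity bounds are those that derive the deficit inequalities for `μ` from the ones for
`I` when `|I| ≤ r`, and for `I ∪ {n+1}` when `|I| > r`, given `ν_{n+1} = v`. -/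
def Admissible (n m : ℕ) (lam lamb : ℕ → ℝ) (r : ℕ) (v : ℝ) (μ : ℕ → ℝ) : Prop :=
  Interlaces (n + m) μ lam ∧ prefixSum μ (n + m) + v = prefixSum lam (n + 1 + m) ∧
    (∀ k ≤ r, capacity m lamb lam k ≤ capacity m lamb μ k) ∧
    ∀ k, r < k → capacity m lamb lam (k + 1) - v ≤ capacity m lamb μ k

lemma admissible_candidate (hlam : ∀ j, 1 ≤ j → j ≤ n + m → lam (j + 1) ≤ lam j)
    (hlamb : AntitoneOn lamb (Set.Icc 1 m)) {r s : ℕ} (hsn : s ≤ n) (hrs : r ≤ s)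
    (hsr : s ≤ r + 1) :
    Admissible n m lam lamb r (capacity m lamb lam (s + 1) - capacity m lamb lam s)
      (candidate m lam lamb s) :=
  ⟨candidate_interlaces hlam, prefixSum_candidate_add hlam hsn,
    fun _ hk => capacity_le_capacity_candidate hlamb (hk.trans hrs),
    fun _ hk => capacity_succ_sub_le_capacity_candidate (fun j hj hjs => hlam j hj (by omega))
      hlamb (by omega)⟩

lemma convex_setOf_admissible (r : ℕ) : Convex ℝ {v | ∃ μ, Admissible n m lam lamb r v μ} := by
  rintro v₁ ⟨μ₁, hint₁, hsum₁, hlo₁, hhi₁⟩ v₂ ⟨μ₂, hint₂, hsum₂, hlo₂, hhi₂⟩ a b ha hb hab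
  have hcap := smul_capacity_add_smul_capacity_le (m := m) (c := lamb) (f := μ₁) (g := μ₂) ha hb hab
  simp only [smul_eq_mul]
  refine ⟨a • μ₁ + b • μ₂, fun j hj hjN => ?_, ?_, fun k hk => ?_, fun k hk => ?_⟩
  · exact convex_Icc _ _ (hint₁ j hj hjN) (hint₂ j hj hjN) ha hb hab
  · rw [prefixSum_smul_add_smul]
    linear_combination a * hsum₁ + b * hsum₂ + prefixSum lam (n + 1 + m) * hab
  · calc capacity m lamb lam k
        = a * capacity m lamb lam k + b * capacity m lamb lam k := by
          linear_combination (-capacity m lamb lam k) * hab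
      _ ≤ a * capacity m lamb μ₁ k + b * capacity m lamb μ₂ k := by
          gcongr; exacts [hlo₁ k hk, hlo₂ k hk]
      _ ≤ _ := hcap k
  · calc capacity m lamb lam (k + 1) - (a * v₁ + b * v₂)
        = a * (capacity m lamb lam (k + 1) - v₁) + b * (capacity m lamb lam (k + 1) - v₂) := by
          linear_combination (-capacity m lamb lam (k + 1)) * hab
      _ ≤ a * capacity m lamb μ₁ k + b * capacity m lamb μ₂ k := by
          gcongr; exacts [hhi₁ k hk, hhi₂ k hk]
      _ ≤ _ := hcap k

theorem exists_interlacing_deficitIneqs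
    (hlam : ∀ j, 1 ≤ j → j < n + 1 + m → lam (j + 1) ≤ lam j)
    (hlamb : AntitoneOn lamb (Set.Icc 1 m))
    (hsum : prefixSum lam (n + 1 + m) = prefixSum lamb m + prefixSum nu (n + 1))
    (h : DeficitIneqs (n + 1) m lam lamb nu) :
    ∃ μ, Interlaces (n + m) μ lam ∧ prefixSum μ (n + m) + nu (n + 1) = prefixSum lam (n + 1 + m) ∧
      DeficitIneqs n m μ lamb nu := by
  set D : ℕ → ℝ := fun r => capacity m lamb lam (r + 1) - capacity m lamb lam r
  have hcand : ∀ r s, s ≤ n → r ≤ s → s ≤ r + 1 →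
      D s ∈ {v | ∃ μ, Admissible n m lam lamb r v μ} := fun r s hsn hrs hsr =>
    ⟨_, admissible_candidate (fun j hj hjn => hlam j hj (by omega)) hlamb hsn hrs hsr⟩
  have hup : nu (n + 1) ≤ D 0 := by
    have h1 := h {n + 1} (by simp)
    rw [sum_singleton, card_singleton] at h1
    linarith [capacity_zero_le (m := m) (c := lamb) lam]
  have hlow : D n ≤ nu (n + 1) := by
    have h1 := h (Icc 1 n) (Icc_subset_Icc_right (by omega))
    rw [Nat.card_Icc, Nat.add_sub_cancel, sum_Icc_one_eq_prefixSum] at h1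
    rw [prefixSum_succ] at hsum
    linarith [capacity_le_prefixSum (m := m) (c := lamb) (f := lam) (n + 1)]
  obtain ⟨r, hrn, hvr, hrv⟩ := exists_le_and_succ_lt D n hup
  obtain ⟨μ, hμ, hsumμ, hlo, hhi⟩ : nu (n + 1) ∈ {v | ∃ μ, Admissible n m lam lamb r v μ} := by
    rcases hrn.lt_or_eq with hrn | hrn
    · exact (convex_setOf_admissible r).ordConnected.out (hcand r (r + 1) hrn (by omega) le_rfl)
        (hcand r r hrn.le le_rfl (by omega)) ⟨(hrv hrn).le, hvr⟩
    · rw [le_antisymm (hrn ▸ hvr) hlow]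
      exact hcand r n le_rfl hrn.le (by omega)
  refine ⟨μ, hμ, hsumμ, fun I hI => ?_⟩
  rcases le_or_gt I.card r with hkr | hrk
  · exact (h I (hI.trans (Icc_subset_Icc_right (by omega)))).trans (hlo _ hkr)
  · have hnotmem : n + 1 ∉ I := fun hmem => by have := hI hmem; simp at this
    have h2 := h (insert (n + 1) I)
      (insert_subset_iff.2 ⟨by simp, hI.trans (Icc_subset_Icc_right (by omega))⟩)
    rw [sum_insert hnotmem, card_insert_of_notMem hnotmem] at h2
    linarith [hhi _ hrk]

end Admissible

theorem realizable_iff_deficitIneqs {m : ℕ} {lamb : ℕ → ℝ}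
    (hlamb : AntitoneOn lamb (Set.Icc 1 m)) :
    ∀ n (lam nu : ℕ → ℝ), (∀ j, 1 ≤ j → j < n + m → lam (j + 1) ≤ lam j) →
      prefixSum lam (n + m) = prefixSum lamb m + prefixSum nu n →
      (Realizable n m lam lamb nu ↔ DeficitIneqs n m lam lamb nu)
  | 0, lam, nu, _, hsum => by
    rw [realizable_zero_iff, deficitIneqs_zero_iff (by simpa using hsum)]
  | n + 1, lam, nu, hlam, hsum => by
    have ih : ∀ μ, Interlaces (n + m) μ lam →
        prefixSum μ (n + m) + nu (n + 1) = prefixSum lam (n + 1 + m) →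
        (Realizable n m μ lamb nu ↔ DeficitIneqs n m μ lamb nu) := fun μ hμ hsumμ =>
      realizable_iff_deficitIneqs hlamb n μ nu hμ.antitone
        (by rw [prefixSum_succ] at hsum; linarith)
    rw [realizable_succ_iff]
    constructor
    · rintro ⟨μ, hμ, hsumμ, hx⟩
      exact deficitIneqs_succ hμ hsumμ ((ih μ hμ hsumμ).1 hx)
    · intro h
      obtain ⟨μ, hμ, hsumμ, hμd⟩ := exists_interlacing_deficitIneqs hlam hlamb hsum h
      exact ⟨μ, hμ, hsumμ, (ih μ hμ hsumμ).2 hμd⟩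

lemma sum_deficit_eq {n m k : ℕ} (lam lamb : ℕ → ℝ) (hk : k ≤ n) :
    ∑ j ∈ Icc 1 (n + m), (if k < j ∧ j ≤ m + k then max 0 (lamb (j - k) - lam j) else 0)
      = prefixSum lamb m - window m lamb lam k := by
  rw [← sum_filter, show (Icc 1 (n + m)).filter (fun j => k < j ∧ j ≤ m + k) = Ioc k (k + m) by
    ext j; simp only [mem_filter, mem_Icc, mem_Ioc]; omega, sum_Ioc_window, prefixSum, window,
    ← sum_sub_distrib]
  refine sum_congr rfl fun s _ => ?_
  rw [Nat.add_sub_cancel_left, ← max_sub_sub_left, sub_self, max_comm]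

end TrapezoidalArray

open TrapezoidalArray in
theorem stmt4_general (n m : ℕ) (lam lamb nu : ℕ → ℝ)
    (hld : ∀ j, 1 ≤ j → j < n + m → lam (j + 1) ≤ lam j)
    (hlbd : ∀ j, 1 ≤ j → j < m → lamb (j + 1) ≤ lamb j)
    (hsum : (∑ j ∈ Icc 1 (n + m), lam j) - (∑ j ∈ Icc 1 m, lamb j)
              - (∑ i ∈ Icc 1 n, nu i) = 0) :
    (∃ x : ℕ → ℕ → ℝ, TrapSC n m x ∧ (∀ i ≤ n, x i 0 = 0) ∧
      (∀ j, 1 ≤ j → j ≤ n + m → pd x n j = lam j) ∧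
      (∀ j, 1 ≤ j → j ≤ m → pd x 0 j = lamb j) ∧
      (∀ i, 1 ≤ i → i ≤ n → x i (i + m) - x (i - 1) (i - 1 + m) = nu i)) ↔
    (∀ I : Finset ℕ, I ⊆ Icc 1 n →
      (∑ j ∈ Icc 1 I.card, lam j) - (∑ i ∈ I, nu i)
        - (∑ j ∈ Icc 1 (n + m), if I.card < j ∧ j ≤ m + I.card
            then max 0 (lamb (j - I.card) - lam j) else 0) ≥ 0) := by
  have hlamb : AntitoneOn lamb (Set.Icc 1 m) :=
    antitoneOn_of_succ_le Set.ordConnected_Icc fun j _ hj hj' => by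
      rw [Order.succ_eq_add_one] at hj' ⊢
      exact hlbd j hj.1 (by simp at hj'; omega)
  simp only [sum_Icc_one_eq_prefixSum] at hsum
  refine (realizable_iff_deficitIneqs hlamb n lam nu hld (by linarith)).trans
    (forall₂_congr fun I hI => ?_)
  rw [sum_Icc_one_eq_prefixSum lam, sum_deficit_eq lam lamb (card_le_of_subset_Icc hI), capacity]
  constructor <;> intro h <;> linarith

/-- Trapezoidal existence theorem: a strip-concave trapezoidal array with boundary data
`λ, λ̄, ν` (and `μ = 0`) exists iff all deficit inequalities
`λ[1,|I|] − ν(I) − Δ_{|I|} ≥ 0` hold. -/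
theorem stmt4 (n m : ℕ) (hn : 1 ≤ n) (lam lamb nu : ℕ → ℝ)
    (hld : ∀ j, 1 ≤ j → j < n + m → lam (j + 1) ≤ lam j)
    (hlbd : ∀ j, 1 ≤ j → j < m → lamb (j + 1) ≤ lamb j)
    (hsum : (∑ j ∈ Icc 1 (n + m), lam j) - (∑ j ∈ Icc 1 m, lamb j)
              - (∑ i ∈ Icc 1 n, nu i) = 0) :
    (∃ x : ℕ → ℕ → ℝ, TrapSC n m x ∧ (∀ i ≤ n, x i 0 = 0) ∧
      (∀ j, 1 ≤ j → j ≤ n + m → pd x n j = lam j) ∧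
      (∀ j, 1 ≤ j → j ≤ m → pd x 0 j = lamb j) ∧
      (∀ i, 1 ≤ i → i ≤ n → x i (i + m) - x (i - 1) (i - 1 + m) = nu i)) ↔
    (∀ I : Finset ℕ, I ⊆ Icc 1 n →
      (∑ j ∈ Icc 1 I.card, lam j) - (∑ i ∈ I, nu i)
        - (∑ j ∈ Icc 1 (n + m), if I.card < j ∧ j ≤ m + I.card
            then max 0 (lamb (j - I.card) - lam j) else 0) ≥ 0) :=
  stmt4_general n m lam lamb nu hld hlbd hsum
end

section
/- If λ ∈ Z^{n+m} and λ̄ ∈ Z^m are weakly decreasing integer tuples and μ ∈ Z^n, then the polytope SC(λ∖λ̄, μ) of strip-concave trapezoidal arrays X of size (n,m) with λ^X = λ, λ̄^X = λ̄ and μ^X = μ is an integral polytope: every vertex of SC(λ∖λ̄, μ) has all entries integer. -/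
open Finset

/-!
If a point `x` of `SC(λ∖λ̄, μ)` has a non-integral row derivative, move it by `±ε` along the
array whose row derivative `∂_{ij}` is `1` where `∂x_{ij}` is non-integral and `0` elsewhere.
All non-integral row derivatives shift by the same amount, so a tight strip-concavity
inequality (two equal derivatives) stays tight, and for `ε` below every positive slack the loose
ones survive too; the boundary data `λ, λ̄, μ` are integral and hence untouched. So at a vertex
every row derivative is integral, and summing down the first column and then along each row
makes every entry integral.
-/

theorem eq_zero_of_add_smul_mem_extremePoints {E : Type*} [AddCommGroup E] [Module ℝ E]
    {A : Set E} {x d : E} {ε : ℝ} (hx : x ∈ A.extremePoints ℝ) (hε : 0 < ε)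
    (hplus : x + ε • d ∈ A) (hminus : x + (-ε) • d ∈ A) : d = 0 := by
  have hmid : x ∈ openSegment ℝ (x + ε • d) (x + (-ε) • d) :=
    ⟨1 / 2, 1 / 2, by norm_num, by norm_num, by norm_num, by module⟩
  have h : ε • d = 0 := by simpa using hx.2 hplus hminus hmid
  exact (smul_eq_zero.mp h).resolve_left hε.ne'

theorem Finset.exists_pos_le_of_pos {ι : Type*} (s : Finset ι) (f : ι → ℝ) :
    ∃ ε > 0, ∀ i ∈ s, 0 < f i → ε ≤ f i := by
  classical
  rcases (s.filter fun i => 0 < f i).eq_empty_or_nonempty with hempty | hne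
  · refine ⟨1, one_pos, fun i hi hfi => ?_⟩
    exact absurd hfi (filter_eq_empty_iff.mp hempty hi)
  · obtain ⟨i₀, hi₀, hmin⟩ := (s.filter fun i => 0 < f i).exists_min_image f hne
    exact ⟨f i₀, (mem_filter.mp hi₀).2, fun i hi hfi => hmin i (mem_filter.mpr ⟨hi, hfi⟩)⟩

theorem exists_int_of_exists_int_sub {u : ℕ → ℝ} {N : ℕ} (h₀ : ∃ z : ℤ, u 0 = z)
    (hstep : ∀ k, 1 ≤ k → k ≤ N → ∃ z : ℤ, u k - u (k - 1) = z) :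
    ∀ k ≤ N, ∃ z : ℤ, u k = z := by
  intro k hk
  induction k with
  | zero => exact h₀
  | succ k ih =>
    obtain ⟨a, ha⟩ := ih (by omega)
    obtain ⟨b, hb⟩ := hstep (k + 1) (by omega) hk
    rw [Nat.add_sub_cancel] at hb
    exact ⟨a + b, by push_cast; linarith⟩

noncomputable def fracIndicator : ℝ → ℝ := (Set.range ((↑) : ℤ → ℝ))ᶜ.indicator 1

theorem fracIndicator_nonneg (t : ℝ) : 0 ≤ fracIndicator t :=
  Set.indicator_nonneg (fun _ _ => zero_le_one) t

theorem fracIndicator_le_one (t : ℝ) : fracIndicator t ≤ 1 :=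
  Set.indicator_apply_le' (fun _ => le_rfl) (fun _ => zero_le_one)

theorem fracIndicator_intCast (z : ℤ) : fracIndicator z = 0 :=
  Set.indicator_of_notMem (by simp) _

theorem exists_int_of_fracIndicator_eq_zero {t : ℝ} (h : fracIndicator t = 0) :
    ∃ z : ℤ, t = z := by
  by_contra hne
  have : fracIndicator t = 1 := Set.indicator_of_mem (by simpa [eq_comm] using hne) _
  simp_all

theorem add_mul_fracIndicator_le {a b c ε : ℝ} (hba : b ≤ a) (hslack : b < a → ε ≤ a - b)
    (hc : |c| ≤ ε) : b + c * fracIndicator b ≤ a + c * fracIndicator a := by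
  rcases hba.eq_or_lt with rfl | hlt
  · exact le_rfl
  have := hslack hlt
  have := abs_le.mp hc
  have := fracIndicator_nonneg a; have := fracIndicator_le_one a
  have := fracIndicator_nonneg b; have := fracIndicator_le_one b
  nlinarith

def scPolytope (n m : ℕ) (lam lamb mu : ℕ → ℤ) : Set (ℕ → ℕ → ℝ) :=
  {y | TrapSC n m y ∧ y 0 0 = 0 ∧
    (∀ j, 1 ≤ j → j ≤ n + m → pd y n j = (lam j : ℝ)) ∧
    (∀ j, 1 ≤ j → j ≤ m → pd y 0 j = (lamb j : ℝ)) ∧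
    (∀ i, 1 ≤ i → i ≤ n → y i 0 - y (i - 1) 0 = (mu i : ℝ)) ∧
    (∀ i j, n < i ∨ i + m < j → y i j = 0)}

def StripGapBound (n m : ℕ) (x : ℕ → ℕ → ℝ) (ε : ℝ) : Prop :=
  ∀ i j, 1 ≤ i → i ≤ n → 1 ≤ j → j ≤ i + m →
    (pd x (i - 1) j < pd x i j → ε ≤ pd x i j - pd x (i - 1) j) ∧
    (pd x i (j + 1) < pd x (i - 1) j → ε ≤ pd x (i - 1) j - pd x i (j + 1))

theorem exists_pos_stripGapBound (n m : ℕ) (x : ℕ → ℕ → ℝ) :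
    ∃ ε > 0, StripGapBound n m x ε := by
  let s := Icc 1 n ×ˢ Icc 1 (n + m)
  obtain ⟨ε₁, hε₁, h₁⟩ := s.exists_pos_le_of_pos fun p => pd x p.1 p.2 - pd x (p.1 - 1) p.2
  obtain ⟨ε₂, hε₂, h₂⟩ :=
    s.exists_pos_le_of_pos fun p => pd x (p.1 - 1) p.2 - pd x p.1 (p.2 + 1)
  refine ⟨min ε₁ ε₂, lt_min hε₁ hε₂, fun i j hi1 hin hj1 hj => ⟨fun hlt => ?_, fun hlt => ?_⟩⟩
  all_goals have hmem : (i, j) ∈ s := by simp only [s, mem_product, mem_Icc]; omega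
  · exact (min_le_left _ _).trans (h₁ _ hmem (sub_pos.mpr hlt))
  · exact (min_le_right _ _).trans (h₂ _ hmem (sub_pos.mpr hlt))

theorem pd_add_smul (x d : ℕ → ℕ → ℝ) (c : ℝ) (i j : ℕ) :
    pd (x + c • d) i j = pd x i j + c * pd d i j := by
  simp only [pd, Pi.add_apply, Pi.smul_apply, smul_eq_mul]
  ring

noncomputable def rowFracCount (n m : ℕ) (x : ℕ → ℕ → ℝ) (i j : ℕ) : ℝ :=
  if i ≤ n ∧ j ≤ i + m then ∑ k ∈ Icc 1 j, fracIndicator (pd x i k) else 0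

section rowFracCount

variable {n m : ℕ} {x : ℕ → ℕ → ℝ} {i j : ℕ}

theorem rowFracCount_zero_right : rowFracCount n m x i 0 = 0 := by
  simp [rowFracCount]

theorem rowFracCount_of_lt (h : n < i ∨ i + m < j) : rowFracCount n m x i j = 0 :=
  if_neg (by omega)

theorem pd_rowFracCount (hi : i ≤ n) (hj1 : 1 ≤ j) (hj : j ≤ i + m) :
    pd (rowFracCount n m x) i j = fracIndicator (pd x i j) := by
  obtain ⟨k, rfl⟩ : ∃ k, j = k + 1 := ⟨j - 1, by omega⟩
  simp only [pd, rowFracCount, Nat.add_sub_cancel, if_pos (And.intro hi hj),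
    if_pos (And.intro hi (by omega : k ≤ i + m)), sum_Icc_succ_top (by omega : 1 ≤ k + 1)]
  ring

theorem pd_add_smul_rowFracCount (c : ℝ) (hi : i ≤ n) (hj1 : 1 ≤ j) (hj : j ≤ i + m) :
    pd (x + c • rowFracCount n m x) i j = pd x i j + c * fracIndicator (pd x i j) := by
  rw [pd_add_smul, pd_rowFracCount hi hj1 hj]

theorem exists_int_pd_of_rowFracCount_eq_zero (h : rowFracCount n m x = 0) (hi : i ≤ n)
    (hj1 : 1 ≤ j) (hj : j ≤ i + m) : ∃ z : ℤ, pd x i j = z := by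
  apply exists_int_of_fracIndicator_eq_zero
  rw [← pd_rowFracCount hi hj1 hj, h]
  simp [pd]

theorem add_smul_rowFracCount_mem_scPolytope {lam lamb mu : ℕ → ℤ}
    (hx : x ∈ scPolytope n m lam lamb mu) {ε c : ℝ} (hgap : StripGapBound n m x ε)
    (hc : |c| ≤ ε) : x + c • rowFracCount n m x ∈ scPolytope n m lam lamb mu := by
  obtain ⟨hsc, h00, hlam, hlamb, hmu, hout⟩ := hx
  refine ⟨fun i j hi1 hin hj1 hj => ⟨fun hj' => ?_, fun hj' => ?_⟩, ?_, ?_, ?_, ?_, ?_⟩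
  · rw [pd_add_smul_rowFracCount c hin hj1 hj, pd_add_smul_rowFracCount c (by omega) hj1 hj']
    exact add_mul_fracIndicator_le ((hsc i j hi1 hin hj1 hj).1 hj')
      (hgap i j hi1 hin hj1 hj).1 hc
  · rw [pd_add_smul_rowFracCount c hin (by omega) (by omega),
      pd_add_smul_rowFracCount c (by omega) hj1 (by omega)]
    exact add_mul_fracIndicator_le ((hsc i j hi1 hin hj1 hj).2 hj')
      (hgap i j hi1 hin hj1 hj).2 hc
  · simp [rowFracCount_zero_right, h00]
  · intro j hj1 hj
    rw [pd_add_smul_rowFracCount c le_rfl hj1 hj, hlam j hj1 hj, fracIndicator_intCast, mul_zero,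
      add_zero]
  · intro j hj1 hj
    rw [pd_add_smul_rowFracCount c (Nat.zero_le n) hj1 (by omega), hlamb j hj1 hj,
      fracIndicator_intCast, mul_zero, add_zero]
  · intro i hi1 hin
    simp [rowFracCount_zero_right, hmu i hi1 hin]
  · intro i j h
    simp [rowFracCount_of_lt h, hout i j h]

end rowFracCount

theorem stmt12_general (n m : ℕ) (lam lamb mu : ℕ → ℤ) :
    ∀ x ∈ Set.extremePoints ℝ {y : ℕ → ℕ → ℝ | TrapSC n m y ∧ y 0 0 = 0 ∧
      (∀ j, 1 ≤ j → j ≤ n + m → pd y n j = (lam j : ℝ)) ∧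
      (∀ j, 1 ≤ j → j ≤ m → pd y 0 j = (lamb j : ℝ)) ∧
      (∀ i, 1 ≤ i → i ≤ n → y i 0 - y (i - 1) 0 = (mu i : ℝ)) ∧
      (∀ i j, n < i ∨ i + m < j → y i j = 0)},
      ∀ i ≤ n, ∀ j ≤ i + m, ∃ z : ℤ, x i j = z := by
  intro x hx
  change x ∈ (scPolytope n m lam lamb mu).extremePoints ℝ at hx
  obtain ⟨ε, hε, hgap⟩ := exists_pos_stripGapBound n m x
  have hcount : rowFracCount n m x = 0 :=
    eq_zero_of_add_smul_mem_extremePoints hx hε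
      (add_smul_rowFracCount_mem_scPolytope hx.1 hgap (abs_of_pos hε).le)
      (add_smul_rowFracCount_mem_scPolytope hx.1 hgap (by rw [abs_neg, abs_of_pos hε]))
  obtain ⟨-, h00, -, -, hmu, -⟩ := hx.1
  have hcol : ∀ i ≤ n, ∃ z : ℤ, x i 0 = z :=
    exists_int_of_exists_int_sub ⟨0, by simpa using h00⟩ fun i hi1 hin => ⟨mu i, hmu i hi1 hin⟩
  intro i hi
  exact exists_int_of_exists_int_sub (hcol i hi) fun j hj1 hj =>
    exists_int_pd_of_rowFracCount_eq_zero hcount hi hj1 hj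

/-- For integer weakly decreasing `λ, λ̄` and integer `μ`, the polytope `SC(λ∖λ̄, μ)` of
strip-concave trapezoidal arrays with these boundary data is integral: every vertex
(extreme point) has all its entries integer. -/
theorem stmt12 (n m : ℕ) (hn : 1 ≤ n) (lam lamb mu : ℕ → ℤ)
    (hld : ∀ j, 1 ≤ j → j < n + m → lam (j + 1) ≤ lam j)
    (hlbd : ∀ j, 1 ≤ j → j < m → lamb (j + 1) ≤ lamb j) :
    ∀ x ∈ Set.extremePoints ℝ {y : ℕ → ℕ → ℝ | TrapSC n m y ∧ y 0 0 = 0 ∧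
      (∀ j, 1 ≤ j → j ≤ n + m → pd y n j = (lam j : ℝ)) ∧
      (∀ j, 1 ≤ j → j ≤ m → pd y 0 j = (lamb j : ℝ)) ∧
      (∀ i, 1 ≤ i → i ≤ n → y i 0 - y (i - 1) 0 = (mu i : ℝ)) ∧
      (∀ i j, n < i ∨ i + m < j → y i j = 0)},
      ∀ i ≤ n, ∀ j ≤ i + m, ∃ z : ℤ, x i j = z :=
  stmt12_general n m lam lamb mu
end

section
/- Fix i ∈ {1,…,n−1}. The zigzag swapping operation at layer i, which for every j replaces the flow values on the zigzag pair Z_j = (e^0_{i−1,j}, e^1_{ij}) and Z'_j = (e^1_{i−1,j}, e^0_{i,j+1}) by g'(e) := g(e) − min(g on Z_j) + min(g on Z'_j) for edges e of Z_j and g'(e) := g(e) − min(g on Z'_j) + min(g on Z_j) for edges e of Z'_j (unchanged elsewhere), maps (λ,λ̄)-admissible flows to (λ,λ̄)-admissible flows, and the corresponding array X' = γ^{-1}(g') has right-boundary tuple ν' obtained from ν = ν^X by transposing entries ν_i and ν_{i+1}. -/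
open Finset

/-- `λ` extended by the conventions `λ₀ := λ₁`, `λ_{n+m+1} := 0`. -/
noncomputable def lamE (n m : ℕ) (lam : ℕ → ℝ) (j : ℕ) : ℝ :=
  if j = 0 then lam 1 else if j ≤ n + m then lam j else 0

/-- `λ̄` extended by the conventions `λ̄₀ := λ₁`, `λ̄_{m+1} := 0`. -/
noncomputable def lbE (m : ℕ) (lam lamb : ℕ → ℝ) (j : ℕ) : ℝ :=
  if j = 0 then lam 1 else if j ≤ m then lamb j else 0

/-- Divergence of an edge function at the node `(i,j)` of `H_{n,m}`. -/
noncomputable def fdiv (n m : ℕ) (h0 h1 : ℕ → ℕ → ℝ) (i j : ℕ) : ℝ :=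
  (if 1 ≤ i ∧ j ≤ i - 1 + m then h0 (i - 1) j else 0) +
  (if 1 ≤ i ∧ 1 ≤ j then h1 (i - 1) (j - 1) else 0) -
  (if i < n then h0 i j + h1 i j else 0)

/-- `(λ,λ̄)`-admissible flows in `H_{n,m}` (vanishing outside the edge set). -/
def Adm (n m : ℕ) (lam lamb : ℕ → ℝ) (g : (ℕ → ℕ → ℝ) × (ℕ → ℕ → ℝ)) : Prop :=
  (∀ i j, i < n → j ≤ i + m → 0 ≤ g.1 i j ∧ 0 ≤ g.2 i j) ∧
  (∀ i j, ¬(i < n ∧ j ≤ i + m) → g.1 i j = 0 ∧ g.2 i j = 0) ∧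
  (∀ i j, 1 ≤ i → i ≤ n - 1 → j ≤ i + m → fdiv n m g.1 g.2 i j = 0) ∧
  (∀ j ≤ n + m, fdiv n m g.1 g.2 n j = lamE n m lam j - lamE n m lam (j + 1)) ∧
  (∀ j ≤ m, fdiv n m g.1 g.2 0 j = lbE m lam lamb (j + 1) - lbE m lam lamb j)

/-- The zigzag swapping operation at layer `i`: for each `j`, the zigzag
`Z_j = (e⁰_{i−1,j}, e¹_{ij})` and `Z'_j = (e¹_{i−1,j}, e⁰_{i,j+1})` exchange their
capacities `min`-wise. -/
noncomputable def zswap (m : ℕ) (g : (ℕ → ℕ → ℝ) × (ℕ → ℕ → ℝ)) (i : ℕ) :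
    (ℕ → ℕ → ℝ) × (ℕ → ℕ → ℝ) :=
  (fun i' j' =>
     if i' = i - 1 ∧ j' ≤ i - 1 + m then
       g.1 (i - 1) j' - min (g.1 (i - 1) j') (g.2 i j')
         + min (g.2 (i - 1) j') (g.1 i (j' + 1))
     else if i' = i ∧ 1 ≤ j' ∧ j' ≤ i + m then
       g.1 i j' - min (g.2 (i - 1) (j' - 1)) (g.1 i j')
         + min (g.1 (i - 1) (j' - 1)) (g.2 i (j' - 1))
     else g.1 i' j',
   fun i' j' =>
     if i' = i - 1 ∧ j' ≤ i - 1 + m then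
       g.2 (i - 1) j' - min (g.2 (i - 1) j') (g.1 i (j' + 1))
         + min (g.1 (i - 1) j') (g.2 i j')
     else if i' = i ∧ j' ≤ i - 1 + m then
       g.2 i j' - min (g.1 (i - 1) j') (g.2 i j')
         + min (g.2 (i - 1) j') (g.1 i (j' + 1))
     else g.2 i' j')

/-- The right-boundary value `ν_k` of the array corresponding to a flow, computed from the
flow: `ν_k = ∑_j g(e¹_{k−1,j})`. -/
noncomputable def nuOf (m : ℕ) (g : (ℕ → ℕ → ℝ) × (ℕ → ℕ → ℝ)) (k : ℕ) : ℝ :=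
  ∑ j ∈ Finset.range (k + m), g.2 (k - 1) j

/-! The two zigzags `Z_j` and `Z'_j` are parallel paths from the node `(i-1, j)` to `(i+1, j+1)`,
so the swap adds to `g` the flow `δ_j (𝟙_{Z_j} - 𝟙_{Z'_j})` with `δ_j = min g|Z'_j - min g|Z_j`,
which has zero divergence everywhere. The edges `e¹_{i-1,j}` lose `δ_j`, those `e¹_{ij}` gain it,
so `ν_i` and `ν_{i+1}` change by `∓ ∑ δ_j`. Conservation at the nodes of row `i` gives
`min g|Z_{j+1} - min g|Z'_j = g(e⁰_{i-1,j+1}) - g(e⁰_{i,j+1})`, so `∑ δ_j` telescopes to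
`ν_i - ν_{i+1}`. -/

lemma min_sub_min_of_add_eq {p q r s : ℝ} (h : p + q = r + s) :
    min p s - min q r = p - r := by
  rcases le_total p s with hps | hsp
  · rw [min_eq_left hps, min_eq_right (by linarith)]
  · rw [min_eq_right hsp, min_eq_left (by linarith)]
    linarith

lemma sum_range_min_sub_min {a b c d : ℕ → ℝ} (N : ℕ) (hc : 0 ≤ c 0) (h₀ : a 0 = c 0 + d 0)
    (hsucc : ∀ j < N, a (j + 1) + b j = c (j + 1) + d (j + 1)) :
    ∑ j ∈ range N, (min (b j) (c (j + 1)) - min (a j) (d j)) =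
      min (a N) (d N) + ∑ j ∈ range N, b j - ∑ j ∈ range (N + 1), d j := by
  induction N with
  | zero =>
    rw [min_eq_right (by linarith)]
    simp
  | succ N ih =>
    have hN := min_sub_min_of_add_eq (hsucc N N.lt_succ_self)
    rw [sum_range_succ, ih fun j hj => hsucc j (by omega), sum_range_succ b,
      sum_range_succ d (N + 1)]
    linarith [hsucc N N.lt_succ_self]

lemma fdiv_add (n m : ℕ) (h₀ h₁ h₀' h₁' : ℕ → ℕ → ℝ) (i j : ℕ) :
    fdiv n m (h₀ + h₀') (h₁ + h₁') i j = fdiv n m h₀ h₁ i j + fdiv n m h₀' h₁' i j := by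
  simp only [fdiv, Pi.add_apply]
  split_ifs <;> ring

lemma nuOf_add (m : ℕ) (g c : (ℕ → ℕ → ℝ) × (ℕ → ℕ → ℝ)) (k : ℕ) :
    nuOf m (g + c) k = nuOf m g k + nuOf m c k :=
  sum_add_distrib

/-- `∑_j δ_j (𝟙_{Z_j} - 𝟙_{Z'_j})` for the zigzags of layer `i = k + 1`. -/
def zigzagFlow (k : ℕ) (δ : ℕ → ℝ) : (ℕ → ℕ → ℝ) × (ℕ → ℕ → ℝ) :=
  (fun i j => if i = k then δ j else if i = k + 1 ∧ 1 ≤ j then -δ (j - 1) else 0,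
   fun i j => if i = k then -δ j else if i = k + 1 then δ j else 0)

section zigzagFlow

variable {n m k : ℕ} {δ : ℕ → ℝ}

lemma fdiv_zigzagFlow (hk : k + 1 < n) (hδ : ∀ j, k + m < j → δ j = 0) (i j : ℕ) :
    fdiv n m (zigzagFlow k δ).1 (zigzagFlow k δ).2 i j = 0 := by
  simp only [fdiv, zigzagFlow]
  split_ifs <;> first
    | ring1
    | omega
    | (rw [hδ j (by omega)]; ring1)
    | (rw [hδ (j - 1) (by omega)]; ring1)

lemma zigzagFlow_eq_zero (hk : k + 1 < n) (hδ : ∀ j, k + m < j → δ j = 0) {i j : ℕ}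
    (hij : ¬(i < n ∧ j ≤ i + m)) :
    (zigzagFlow k δ).1 i j = 0 ∧ (zigzagFlow k δ).2 i j = 0 := by
  simp only [zigzagFlow]
  split_ifs <;> refine ⟨?_, ?_⟩ <;> (try rw [neg_eq_zero]) <;> first
    | rfl
    | exact hδ j (by omega)
    | exact hδ (j - 1) (by omega)

lemma nuOf_zigzagFlow_lower : nuOf m (zigzagFlow k δ) (k + 1) = -∑ j ∈ range (k + 1 + m), δ j := by
  simp [nuOf, zigzagFlow, add_right_comm k 1 m]

lemma nuOf_zigzagFlow_upper (hδ : ∀ j, k + m < j → δ j = 0) :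
    nuOf m (zigzagFlow k δ) (k + 2) = ∑ j ∈ range (k + 1 + m), δ j := by
  simp [nuOf, zigzagFlow, show k + 2 + m = k + 1 + m + 1 by omega, sum_range_succ,
    hδ (k + 1 + m) (by omega)]

lemma nuOf_zigzagFlow_of_ne {k' : ℕ} (hk' : 1 ≤ k') (h₁ : k' ≠ k + 1) (h₂ : k' ≠ k + 2) :
    nuOf m (zigzagFlow k δ) k' = 0 := by
  simp [nuOf, zigzagFlow, show k' - 1 ≠ k by omega, show k' - 1 ≠ k + 1 by omega]

end zigzagFlow

lemma Adm.add {n m : ℕ} {lam lamb : ℕ → ℝ} {g c : (ℕ → ℕ → ℝ) × (ℕ → ℕ → ℝ)}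
    (hg : Adm n m lam lamb g) (hdiv : ∀ i j, fdiv n m c.1 c.2 i j = 0)
    (hout : ∀ i j, ¬(i < n ∧ j ≤ i + m) → c.1 i j = 0 ∧ c.2 i j = 0)
    (hnonneg : ∀ i j, i < n → j ≤ i + m → 0 ≤ (g + c).1 i j ∧ 0 ≤ (g + c).2 i j) :
    Adm n m lam lamb (g + c) := by
  obtain ⟨-, hzero, hint, htop, hbot⟩ := hg
  have hfdiv : ∀ i j, fdiv n m (g + c).1 (g + c).2 i j = fdiv n m g.1 g.2 i j := fun i j => by
    rw [Prod.fst_add, Prod.snd_add, fdiv_add, hdiv, add_zero]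
  refine ⟨hnonneg, fun i j hij => ?_, ?_, ?_, ?_⟩
  · simp [hzero i j hij, hout i j hij]
  · simpa only [hfdiv] using hint
  · simpa only [hfdiv] using htop
  · simpa only [hfdiv] using hbot

section Adm

variable {n m k : ℕ} {lam lamb : ℕ → ℝ} {g : (ℕ → ℕ → ℝ) × (ℕ → ℕ → ℝ)}

lemma Adm.conservation_zero (hg : Adm n m lam lamb g) (hk : k + 1 < n) :
    g.1 k 0 = g.1 (k + 1) 0 + g.2 (k + 1) 0 := by
  have h := hg.2.2.1 (k + 1) 0 (by omega) (by omega) (by omega)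
  simp only [fdiv, Nat.add_sub_cancel, if_pos hk, if_pos (show 1 ≤ k + 1 ∧ 0 ≤ k + m by omega),
    if_neg (show ¬(1 ≤ k + 1 ∧ 1 ≤ 0) by omega)] at h
  linarith

lemma Adm.conservation_succ (hg : Adm n m lam lamb g) (hk : k + 1 < n) {j : ℕ}
    (hj : j + 1 ≤ k + 1 + m) :
    g.1 k (j + 1) + g.2 k j = g.1 (k + 1) (j + 1) + g.2 (k + 1) (j + 1) := by
  have h := hg.2.2.1 (k + 1) (j + 1) (by omega) (by omega) hj
  simp only [fdiv, Nat.add_sub_cancel, if_pos hk,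
    if_pos (show 1 ≤ k + 1 ∧ 1 ≤ j + 1 by omega)] at h
  by_cases hjk : j + 1 ≤ k + m
  · rw [if_pos ⟨by omega, hjk⟩] at h
    linarith
  · rw [if_neg (by omega)] at h
    rw [(hg.2.1 k _ (by omega)).1]
    linarith

end Adm

noncomputable def zigzagDelta (m : ℕ) (g : (ℕ → ℕ → ℝ) × (ℕ → ℕ → ℝ)) (k j : ℕ) : ℝ :=
  if j ≤ k + m then min (g.2 k j) (g.1 (k + 1) (j + 1)) - min (g.1 k j) (g.2 (k + 1) j) else 0

lemma zigzagDelta_eq_zero {m k j : ℕ} (g : (ℕ → ℕ → ℝ) × (ℕ → ℕ → ℝ)) (hj : k + m < j) :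
    zigzagDelta m g k j = 0 :=
  if_neg (by omega)

lemma zswap_eq_add_zigzagFlow (m k : ℕ) (g : (ℕ → ℕ → ℝ) × (ℕ → ℕ → ℝ)) :
    zswap m g (k + 1) = g + zigzagFlow k (zigzagDelta m g k) := by
  ext i j
  · simp only [zswap, zigzagFlow, zigzagDelta, Prod.fst_add, Pi.add_apply, Nat.add_sub_cancel]
    split_ifs <;> first
      | ring1
      | omega
      | (obtain rfl : i = k := by omega
         ring1)
      | (obtain rfl : i = k + 1 := by omega
         rw [Nat.sub_add_cancel (by omega)]
         ring1)
  · simp only [zswap, zigzagFlow, zigzagDelta, Prod.snd_add, Pi.add_apply, Nat.add_sub_cancel]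
    split_ifs <;> first
      | ring1
      | omega
      | (obtain rfl : i = k := by omega
         ring1)
      | (obtain rfl : i = k + 1 := by omega
         ring1)

lemma zswap_nonneg {n m k : ℕ} {g : (ℕ → ℕ → ℝ) × (ℕ → ℕ → ℝ)}
    (hpos : ∀ i j, i < n → j ≤ i + m → 0 ≤ g.1 i j ∧ 0 ≤ g.2 i j) (hk : k + 1 < n)
    (i j : ℕ) (hi : i < n) (hj : j ≤ i + m) :
    0 ≤ (zswap m g (k + 1)).1 i j ∧ 0 ≤ (zswap m g (k + 1)).2 i j := by
  have key {a b c d : ℝ} (hc : 0 ≤ c) (hd : 0 ≤ d) : 0 ≤ a - min a b + min c d :=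
    add_nonneg (sub_nonneg.2 (min_le_left a b)) (le_min hc hd)
  simp only [zswap, Nat.add_sub_cancel]
  constructor
  · split_ifs with hlow hup
    · exact key (hpos k j (by omega) (by omega)).2 (hpos (k + 1) (j + 1) hk (by omega)).1
    · rw [min_comm]
      exact key (hpos k (j - 1) (by omega) (by omega)).1 (hpos (k + 1) (j - 1) hk (by omega)).2
    · exact (hpos i j hi hj).1
  · split_ifs with hlow hup
    · exact key (hpos k j (by omega) (by omega)).1 (hpos (k + 1) j hk (by omega)).2
    · rw [min_comm]
      exact key (hpos k j (by omega) (by omega)).2 (hpos (k + 1) (j + 1) hk (by omega)).1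
    · exact (hpos i j hi hj).2

lemma Adm.sum_zigzagDelta {n m k : ℕ} {lam lamb : ℕ → ℝ} {g : (ℕ → ℕ → ℝ) × (ℕ → ℕ → ℝ)}
    (hg : Adm n m lam lamb g) (hk : k + 1 < n) :
    ∑ j ∈ range (k + 1 + m), zigzagDelta m g k j = nuOf m g (k + 1) - nuOf m g (k + 2) := by
  have h := sum_range_min_sub_min (a := g.1 k) (b := g.2 k) (c := g.1 (k + 1)) (d := g.2 (k + 1))
    (k + 1 + m) (hg.1 (k + 1) 0 hk (by omega)).1 (hg.conservation_zero hk)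
    fun j hj => hg.conservation_succ hk (by omega)
  rw [(hg.2.1 k (k + 1 + m) (by omega)).1, min_eq_left (hg.1 (k + 1) (k + 1 + m) hk le_rfl).2,
    zero_add] at h
  unfold zigzagDelta
  rw [sum_congr rfl fun j hj => if_pos (by rw [mem_range] at hj; omega), h]
  simp [nuOf, add_right_comm k 1 m, show k + 2 + m = k + 1 + m + 1 by omega]

/-- The zigzag swapping operation at layer `i` maps `(λ,λ̄)`-admissible flows to
`(λ,λ̄)`-admissible flows, and transposes the entries `ν_i` and `ν_{i+1}` of the
right-boundary tuple of the corresponding array. -/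
theorem stmt14 (n m : ℕ) (lam lamb : ℕ → ℝ)
    (g : (ℕ → ℕ → ℝ) × (ℕ → ℕ → ℝ)) (hg : Adm n m lam lamb g)
    (i : ℕ) (h1 : 1 ≤ i) (h2 : i ≤ n - 1) :
    Adm n m lam lamb (zswap m g i) ∧
    nuOf m (zswap m g i) i = nuOf m g (i + 1) ∧
    nuOf m (zswap m g i) (i + 1) = nuOf m g i ∧
    (∀ k, 1 ≤ k → k ≤ n → k ≠ i → k ≠ i + 1 → nuOf m (zswap m g i) k = nuOf m g k) := by
  obtain ⟨k, rfl⟩ : ∃ k, i = k + 1 := ⟨i - 1, by omega⟩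
  have hk : k + 1 < n := by omega
  have hδ : ∀ j, k + m < j → zigzagDelta m g k j = 0 := fun j => zigzagDelta_eq_zero g
  have hsum := hg.sum_zigzagDelta hk
  rw [zswap_eq_add_zigzagFlow]
  refine ⟨hg.add (fdiv_zigzagFlow hk hδ) (fun i j => zigzagFlow_eq_zero hk hδ) ?_, ?_, ?_, ?_⟩
  · rw [← zswap_eq_add_zigzagFlow]
    exact zswap_nonneg hg.1 hk
  · rw [nuOf_add, nuOf_zigzagFlow_lower, hsum]
    ring
  · rw [nuOf_add, nuOf_zigzagFlow_upper hδ, hsum]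
    ring
  · intro k' hk' _ hne₁ hne₂
    rw [nuOf_add, nuOf_zigzagFlow_of_ne hk' hne₁ hne₂, add_zero]
end

section
/- For integer weakly decreasing λ ∈ Z^{n+m}, λ̄ ∈ Z^m and integer ν ∈ Z^n, and any permutation ν' of ν, the number of integer strip-concave trapezoidal arrays X of size (n,m) with x_{i0} = 0, λ^X = λ, λ̄^X = λ̄, ν^X = ν equals the number of such arrays with ν^X = ν'. (Equivalently, the skew Kostka number K(λ∖λ̄, ν) is invariant under permutations of ν.) -/
open Finset

/-- Integer row derivative. -/
def pdZ (x : ℕ → ℕ → ℤ) (i j : ℕ) : ℤ := x i j - x i (j - 1)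

/-- Strip-concavity for an integer trapezoidal array of size `(n,m)`. -/
def TrapSCZ (n m : ℕ) (x : ℕ → ℕ → ℤ) : Prop :=
  ∀ i j, 1 ≤ i → i ≤ n → 1 ≤ j → j ≤ i + m →
    (j ≤ i - 1 + m → pdZ x i j ≥ pdZ x (i - 1) j) ∧
    (j < i + m → pdZ x (i - 1) j ≥ pdZ x i (j + 1))

/-- Integer strip-concave trapezoidal arrays with boundary data `λ, λ̄, ν` (and `μ = 0`),
normalized to vanish outside the trapezoid. -/
def SCset (n m : ℕ) (lam lamb nu : ℕ → ℤ) : Set (ℕ → ℕ → ℤ) :=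
  {x | TrapSCZ n m x ∧ (∀ i ≤ n, x i 0 = 0) ∧
    (∀ j, 1 ≤ j → j ≤ n + m → pdZ x n j = lam j) ∧
    (∀ j, 1 ≤ j → j ≤ m → pdZ x 0 j = lamb j) ∧
    (∀ i, 1 ≤ i → i ≤ n → x i (i + m) - x (i - 1) (i - 1 + m) = nu i) ∧
    (∀ i j, n < i ∨ i + m < j → x i j = 0)}

/-! For `1 ≤ k < n`, the strip-concavity conditions involving row `k` say exactly that each
derivative `∂x_{kj}` lies in an interval `[l_j, u_j]` determined by rows `k - 1` and `k + 1`.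
Reflecting `∂x_{kj} ↦ l_j + u_j - ∂x_{kj}` (a Bender–Knuth move) is therefore an involution on
the arrays. Since `u_{j+1} + l_j = ∂x_{k+1,j+1} + ∂x_{k-1,j}` (a `min` plus the matching `max`),
the sums `∑ (l_j + u_j)` telescope, the new last entry of row `k` is
`x_{k+1,k+1+m} + x_{k-1,k-1+m} - x_{k,k+m}`, and the move exchanges `ν_k` and `ν_{k+1}`.
Adjacent transpositions generate the symmetric group. -/

theorem Equiv.Perm.viaEmbedding_swap {α β : Type*} [DecidableEq α] [DecidableEq β] (ι : α ↪ β)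
    (a b : α) : (Equiv.swap a b).viaEmbedding ι = Equiv.swap (ι a) (ι b) := by
  ext y
  by_cases hy : y ∈ Set.range ι
  · obtain ⟨z, rfl⟩ := hy
    rw [viaEmbedding_apply, ι.injective.swap_apply]
  · rw [viaEmbedding_apply_of_notMem _ _ _ hy, Equiv.swap_apply_of_ne_of_ne] <;>
      rintro rfl <;> exact hy ⟨_, rfl⟩

namespace StripConcave

def RowSC (m : ℕ) (x : ℕ → ℕ → ℤ) (i : ℕ) : Prop :=
  ∀ j, 1 ≤ j → j ≤ i + m →
    (j ≤ i - 1 + m → pdZ x i j ≥ pdZ x (i - 1) j) ∧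
    (j < i + m → pdZ x (i - 1) j ≥ pdZ x i (j + 1))

theorem trapSCZ_iff {n m : ℕ} {x : ℕ → ℕ → ℤ} :
    TrapSCZ n m x ↔ ∀ i, 1 ≤ i → i ≤ n → RowSC m x i :=
  ⟨fun h i hi hin j => h i j hi hin, fun h i j hi hin => h i hi hin j⟩

theorem rowSC_congr {m i : ℕ} {x y : ℕ → ℕ → ℤ} (h : pdZ y i = pdZ x i)
    (h' : pdZ y (i - 1) = pdZ x (i - 1)) : RowSC m y i ↔ RowSC m x i := by
  simp only [RowSC, h, h']

theorem sum_range_pdZ (x : ℕ → ℕ → ℤ) (i j : ℕ) :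
    ∑ l ∈ range j, pdZ x i (l + 1) = x i j - x i 0 := by
  simpa [pdZ] using Finset.sum_range_sub (x i) j

section Toggle

variable (m k : ℕ) (x : ℕ → ℕ → ℤ)

/-- The entry of row `k - 1` is dropped where it lies outside the trapezoid: `j = 1` here,
`j = k + m` in `lowerBound`. -/
def upperBound (j : ℕ) : ℤ :=
  if j = 1 then pdZ x (k + 1) 1 else min (pdZ x (k + 1) j) (pdZ x (k - 1) (j - 1))

def lowerBound (j : ℕ) : ℤ :=
  if j = k + m then pdZ x (k + 1) (k + m + 1) else max (pdZ x (k + 1) (j + 1)) (pdZ x (k - 1) j)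

def reflectedDeriv (j : ℕ) : ℤ := upperBound k x j + lowerBound m k x j - pdZ x k j

def toggle : ℕ → ℕ → ℤ :=
  fun i j => if i = k ∧ j ≤ k + m then ∑ l ∈ range j, reflectedDeriv m k x (l + 1) else x i j

variable {m k x}

theorem upperBound_le_pdZ_succ (j : ℕ) : upperBound k x j ≤ pdZ x (k + 1) j := by
  unfold upperBound; split_ifs with h
  · rw [h]
  · exact min_le_left _ _

theorem upperBound_succ_le_pdZ_pred {j : ℕ} (hj : 1 ≤ j) :
    upperBound k x (j + 1) ≤ pdZ x (k - 1) j := by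
  simp only [upperBound, show j + 1 ≠ 1 by omega, if_false, Nat.add_sub_cancel]
  exact min_le_right _ _

theorem pdZ_succ_le_lowerBound (j : ℕ) : pdZ x (k + 1) (j + 1) ≤ lowerBound m k x j := by
  unfold lowerBound; split_ifs with h
  · rw [h]
  · exact le_max_left _ _

theorem pdZ_pred_le_lowerBound {j : ℕ} (hj : j ≠ k + m) :
    pdZ x (k - 1) j ≤ lowerBound m k x j := by
  simp [lowerBound, hj]

theorem rowSC_and_rowSC_succ_iff (hk : 1 ≤ k) :
    RowSC m x k ∧ RowSC m x (k + 1) ↔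
      ∀ j, 1 ≤ j → j ≤ k + m → lowerBound m k x j ≤ pdZ x k j ∧ pdZ x k j ≤ upperBound k x j := by
  simp only [RowSC, Nat.add_sub_cancel]
  constructor
  · rintro ⟨hrow, hsucc⟩ j hj1 hjk
    have h1 := hsucc j hj1 (by omega)
    refine ⟨?_, ?_⟩
    · unfold lowerBound; split_ifs with h
      · subst h; exact (h1.2 (by omega))
      · exact max_le (h1.2 (by omega)) ((hrow j hj1 (by omega)).1 (by omega))
    · unfold upperBound; split_ifs with h
      · subst h; exact h1.1 (by omega)
      · have h2 := (hrow (j - 1) (by omega) (by omega)).2 (by omega)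
        rw [Nat.sub_add_cancel hj1] at h2
        exact le_min (h1.1 (by omega)) h2
  · intro hb
    refine ⟨fun j hj1 hjk => ⟨fun hj => ?_, fun hj => ?_⟩,
      fun j hj1 hjk => ⟨fun hj => ?_, fun hj => ?_⟩⟩
    · exact (pdZ_pred_le_lowerBound (by omega)).trans (hb j hj1 (by omega)).1
    · exact (hb (j + 1) (by omega) (by omega)).2.trans (upperBound_succ_le_pdZ_pred hj1)
    · exact (hb j hj1 hj).2.trans (upperBound_le_pdZ_succ j)
    · exact (pdZ_succ_le_lowerBound j).trans (hb j hj1 (by omega)).1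

theorem toggle_of_ne {i : ℕ} (j : ℕ) (h : i ≠ k) : toggle m k x i j = x i j := by
  simp [toggle, h]

theorem pdZ_toggle_of_ne {i : ℕ} (h : i ≠ k) : pdZ (toggle m k x) i = pdZ x i := by
  funext j; simp [pdZ, toggle_of_ne _ h]

theorem pdZ_toggle_self {j : ℕ} (hj1 : 1 ≤ j) (hjk : j ≤ k + m) :
    pdZ (toggle m k x) k j = reflectedDeriv m k x j := by
  obtain ⟨j, rfl⟩ := Nat.exists_eq_add_of_le' hj1
  simp [pdZ, toggle, hjk, show j ≤ k + m by omega, sum_range_succ]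

theorem upperBound_toggle (hk : 1 ≤ k) : upperBound k (toggle m k x) = upperBound k x := by
  funext j
  simp only [upperBound, pdZ_toggle_of_ne (show k + 1 ≠ k by omega),
    pdZ_toggle_of_ne (show k - 1 ≠ k by omega)]

theorem lowerBound_toggle (hk : 1 ≤ k) : lowerBound m k (toggle m k x) = lowerBound m k x := by
  funext j
  simp only [lowerBound, pdZ_toggle_of_ne (show k + 1 ≠ k by omega),
    pdZ_toggle_of_ne (show k - 1 ≠ k by omega)]

theorem trapSCZ_toggle {n : ℕ} (hk1 : 1 ≤ k) (hkn : k + 1 ≤ n) (hx : TrapSCZ n m x) :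
    TrapSCZ n m (toggle m k x) := by
  rw [trapSCZ_iff] at hx ⊢
  have hrows : RowSC m (toggle m k x) k ∧ RowSC m (toggle m k x) (k + 1) := by
    have hb := (rowSC_and_rowSC_succ_iff hk1).1 ⟨hx k hk1 (by omega), hx (k + 1) (by omega) hkn⟩
    refine (rowSC_and_rowSC_succ_iff hk1).2 fun j hj1 hjk => ?_
    rw [upperBound_toggle hk1, lowerBound_toggle hk1, pdZ_toggle_self hj1 hjk, reflectedDeriv]
    constructor <;> linarith [hb j hj1 hjk]
  intro i hi1 hin
  by_cases hik : i = k
  · exact hik ▸ hrows.1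
  by_cases hik' : i = k + 1
  · exact hik' ▸ hrows.2
  exact (rowSC_congr (pdZ_toggle_of_ne hik) (pdZ_toggle_of_ne (by omega))).2 (hx i hi1 hin)

theorem sum_upperBound_add_lowerBound (hk : 1 ≤ k) :
    ∑ l ∈ range (k + m), (upperBound k x (l + 1) + lowerBound m k x (l + 1)) =
      ∑ l ∈ range (k + 1 + m), pdZ x (k + 1) (l + 1) +
        ∑ l ∈ range (k - 1 + m), pdZ x (k - 1) (l + 1) := by
  obtain ⟨N, hN⟩ : ∃ N, k + m = N + 1 := ⟨k - 1 + m, by omega⟩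
  have hpair : ∀ l < N, upperBound k x (l + 2) + lowerBound m k x (l + 1) =
      pdZ x (k + 1) (l + 2) + pdZ x (k - 1) (l + 1) := fun l hl => by
    simp only [upperBound, lowerBound, show l + 2 ≠ 1 by omega, show l + 1 ≠ k + m by omega,
      if_false, show l + 2 - 1 = l + 1 by omega]
    exact min_add_max _ _
  rw [sum_add_distrib, hN, sum_range_succ' (fun l => upperBound k x (l + 1)), sum_range_succ,
    show k + 1 + m = N + 2 by omega, sum_range_succ, sum_range_succ',
    show k - 1 + m = N by omega]
  have := sum_congr rfl fun l hl => hpair l (mem_range.1 hl)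
  rw [sum_add_distrib, sum_add_distrib] at this
  simp only [upperBound, lowerBound, if_true, ← hN] at *
  linarith

theorem toggle_self_row_end (hk : 1 ≤ k) (h0 : ∀ i ≤ k + 1, x i 0 = 0) :
    toggle m k x k (k + m) = x (k + 1) (k + 1 + m) + x (k - 1) (k - 1 + m) - x k (k + m) := by
  simp only [toggle, and_self, le_refl, if_true, reflectedDeriv, sum_sub_distrib,
    sum_upperBound_add_lowerBound hk, sum_range_pdZ, h0 _ le_rfl, h0 k (by omega),
    h0 (k - 1) (by omega)]
  ring

theorem toggle_toggle (hk : 1 ≤ k) (h0 : x k 0 = 0) : toggle m k (toggle m k x) = x := by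
  funext i j
  by_cases h : i = k ∧ j ≤ k + m
  · obtain ⟨rfl, hj⟩ := h
    have hrefl : ∀ l ∈ range j, reflectedDeriv m i (toggle m i x) (l + 1) = pdZ x i (l + 1) :=
      fun l hl => by
        rw [reflectedDeriv, upperBound_toggle hk, lowerBound_toggle hk,
          pdZ_toggle_self (by omega) (by have := mem_range.1 hl; omega), reflectedDeriv]
        ring
    simp only [toggle, true_and, if_pos hj, sum_congr rfl hrefl, sum_range_pdZ, h0, sub_zero]
  · simp only [toggle, if_neg h]

end Toggle

section SCset

variable {n m : ℕ} {lam lamb : ℕ → ℤ}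

theorem SCset_congr {nu nu' : ℕ → ℤ} (h : ∀ i, 1 ≤ i → i ≤ n → nu i = nu' i) :
    SCset n m lam lamb nu = SCset n m lam lamb nu' := by
  ext x
  refine and_congr_right fun _ => and_congr_right fun _ => and_congr_right fun _ =>
    and_congr_right fun _ => and_congr_left fun _ => forall_congr' fun i => ?_
  exact imp_congr_right fun hi1 => imp_congr_right fun hin => by rw [h i hi1 hin]

theorem toggle_mem_SCset {k : ℕ} {nu : ℕ → ℤ} {x : ℕ → ℕ → ℤ} (hk1 : 1 ≤ k) (hkn : k + 1 ≤ n)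
    (hx : x ∈ SCset n m lam lamb nu) :
    toggle m k x ∈ SCset n m lam lamb (nu ∘ Equiv.swap k (k + 1)) := by
  obtain ⟨hSC, h0, hlam, hlamb, hnu, hsupp⟩ := hx
  have hend := toggle_self_row_end (m := m) hk1 fun i hi => h0 i (hi.trans hkn)
  refine ⟨trapSCZ_toggle hk1 hkn hSC, fun i hi => ?_, fun j hj1 hj2 => ?_,
    fun j hj1 hj2 => ?_, fun i hi1 hin => ?_, fun i j hij => ?_⟩
  · by_cases hik : i = k
    · simp [toggle, hik]
    · rw [toggle_of_ne _ hik, h0 i hi]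
  · rw [pdZ_toggle_of_ne (by omega), hlam j hj1 hj2]
  · rw [pdZ_toggle_of_ne (by omega), hlamb j hj1 hj2]
  · rcases (by omega : i = k ∨ i = k + 1 ∨ (i ≠ k ∧ i ≠ k + 1)) with rfl | rfl | ⟨hik, hik'⟩
    · have := hnu (i + 1) (by omega) hkn
      rw [hend, toggle_of_ne _ (by omega), Function.comp_apply, Equiv.swap_apply_left,
        ← this, Nat.add_sub_cancel]
      ring
    · have := hnu k hk1 (by omega)
      rw [Nat.add_sub_cancel, hend, toggle_of_ne _ (by omega), Function.comp_apply,
        Equiv.swap_apply_right, ← this]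
      ring
    · rw [toggle_of_ne _ hik, toggle_of_ne _ (by omega), Function.comp_apply,
        Equiv.swap_apply_of_ne_of_ne hik hik', hnu i hi1 hin]
  · rw [toggle, if_neg (by omega), hsupp i j hij]

theorem ncard_SCset_comp_swap {k : ℕ} (hk1 : 1 ≤ k) (hkn : k + 1 ≤ n) (nu : ℕ → ℤ) :
    (SCset n m lam lamb nu).ncard =
      (SCset n m lam lamb (nu ∘ Equiv.swap k (k + 1))).ncard := by
  have hswap : (nu ∘ Equiv.swap k (k + 1)) ∘ Equiv.swap k (k + 1) = nu := by
    funext i; simp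
  have h0 {nu' : ℕ → ℤ} {x : ℕ → ℕ → ℤ} (hx : x ∈ SCset n m lam lamb nu') : x k 0 = 0 :=
    hx.2.1 k (by omega)
  exact Set.ncard_congr'
    { toFun := fun x => ⟨toggle m k x, toggle_mem_SCset hk1 hkn x.2⟩
      invFun := fun y => ⟨toggle m k y, by simpa only [hswap] using toggle_mem_SCset hk1 hkn y.2⟩
      left_inv := fun x => Subtype.ext (toggle_toggle hk1 (h0 x.2))
      right_inv := fun y => Subtype.ext (toggle_toggle hk1 (h0 y.2)) }

variable (n m lam lamb) in
def ncardInvariantPerms : Submonoid (Equiv.Perm ℕ) where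
  carrier := {τ | ∀ nu, (SCset n m lam lamb nu).ncard = (SCset n m lam lamb (nu ∘ τ)).ncard}
  one_mem' _ := rfl
  mul_mem' {σ τ} hσ hτ nu := by rw [Equiv.Perm.coe_mul, ← Function.comp_assoc, hσ, hτ]

theorem swap_mem_ncardInvariantPerms {k : ℕ} (hk1 : 1 ≤ k) (hkn : k + 1 ≤ n) :
    Equiv.swap k (k + 1) ∈ ncardInvariantPerms n m lam lamb :=
  ncard_SCset_comp_swap hk1 hkn

end SCset

def rowEmb (n : ℕ) : Fin n ↪ ℕ := ⟨fun i => i + 1, fun a b h => Fin.ext (by simpa using h)⟩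

@[simp]
theorem rowEmb_apply {n : ℕ} (i : Fin n) : rowEmb n i = i + 1 := rfl

theorem viaEmbedding_mem_ncardInvariantPerms {n m : ℕ} {lam lamb : ℕ → ℤ}
    (e : Equiv.Perm (Fin n)) : e.viaEmbedding (rowEmb n) ∈ ncardInvariantPerms n m lam lamb := by
  cases n with
  | zero =>
    rw [Subsingleton.elim e 1, ← Equiv.Perm.viaEmbeddingHom_apply, map_one]
    exact one_mem _
  | succ n =>
    have hgen : Submonoid.closure (Set.range fun i : Fin n ↦ Equiv.swap i.castSucc i.succ) ≤
        (ncardInvariantPerms (n + 1) m lam lamb).comap (Equiv.Perm.viaEmbeddingHom (rowEmb _)) := by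
      rw [Submonoid.closure_le]
      rintro _ ⟨i, rfl⟩
      rw [SetLike.mem_coe, Submonoid.mem_comap, Equiv.Perm.viaEmbeddingHom_apply,
        Equiv.Perm.viaEmbedding_swap]
      exact swap_mem_ncardInvariantPerms (by simp) (by simp)
    rw [Equiv.Perm.mclosure_swap_castSucc_succ] at hgen
    exact hgen (Submonoid.mem_top e)

theorem exists_viaEmbedding_eq {n : ℕ} (σ : Equiv.Perm ℕ)
    (hσ : ∀ i, 1 ≤ i → i ≤ n → 1 ≤ σ i ∧ σ i ≤ n) :
    ∃ e : Equiv.Perm (Fin n), ∀ i, 1 ≤ i → i ≤ n → e.viaEmbedding (rowEmb n) i = σ i := by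
  have hσ' (j : Fin n) := hσ (j + 1) (by omega) j.isLt
  let φ (j : Fin n) : Fin n := ⟨σ (j + 1) - 1, by have := hσ' j; omega⟩
  have hφ : φ.Injective := fun a b hab => by
    have hab : σ (a + 1) - 1 = σ (b + 1) - 1 := congrArg Fin.val hab
    have := hσ' a
    have := hσ' b
    have := σ.injective (show σ (a + 1) = σ (b + 1) by omega)
    exact Fin.ext (by omega)
  refine ⟨Equiv.ofBijective φ (Finite.injective_iff_bijective.1 hφ), fun i hi1 hin => ?_⟩
  obtain ⟨j, rfl⟩ : ∃ j : Fin n, rowEmb n j = i := ⟨⟨i - 1, by omega⟩, by simp; omega⟩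
  have := hσ' j
  rw [Equiv.Perm.viaEmbedding_apply, rowEmb_apply, rowEmb_apply, Equiv.ofBijective_apply]
  exact Nat.sub_add_cancel this.1

end StripConcave

theorem stmt15_general (n m : ℕ) (lam lamb nu nu' : ℕ → ℤ)
    (σ : Equiv.Perm ℕ)
    (hσ : ∀ i, 1 ≤ i → i ≤ n → 1 ≤ σ i ∧ σ i ≤ n)
    (hperm : ∀ i, 1 ≤ i → i ≤ n → nu' i = nu (σ i)) :
    Set.ncard (SCset n m lam lamb nu) = Set.ncard (SCset n m lam lamb nu') := by
  obtain ⟨e, he⟩ := StripConcave.exists_viaEmbedding_eq σ hσ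
  rw [StripConcave.viaEmbedding_mem_ncardInvariantPerms e nu]
  exact congrArg Set.ncard <| StripConcave.SCset_congr fun i hi1 hin => by
    rw [Function.comp_apply, he i hi1 hin, hperm i hi1 hin]

/-- The skew Kostka number `K(λ∖λ̄, ν)` is invariant under permutations of `ν`. -/
theorem stmt15 (n m : ℕ) (lam lamb nu nu' : ℕ → ℤ)
    (hld : ∀ j, 1 ≤ j → j < n + m → lam (j + 1) ≤ lam j)
    (hlbd : ∀ j, 1 ≤ j → j < m → lamb (j + 1) ≤ lamb j)
    (σ : Equiv.Perm ℕ)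
    (hσ : ∀ i, 1 ≤ i → i ≤ n → 1 ≤ σ i ∧ σ i ≤ n)
    (hperm : ∀ i, 1 ≤ i → i ≤ n → nu' i = nu (σ i)) :
    Set.ncard (SCset n m lam lamb nu) = Set.ncard (SCset n m lam lamb nu') :=
  stmt15_general n m lam lamb nu nu' σ hσ hperm
end

section
/- Let n ≥ 1, and let λ, λ̄ ∈ R^m be weakly decreasing, μ, ν ∈ R^n with |λ| − |λ̄| + |μ| − |ν| = 0. A strip-concave parallelogram-wise array X of size (n,m) with λ^X = λ, λ̄^X = λ̄, μ^X = μ, ν^X = ν exists if and only if for every I ⊆ {1,…,n}: λ[1,|I|] − λ̄[m−|I|+1, m] + μ(I) − ν(I) − Δ_{|I|} ≥ 0 when |I| ≤ m, and |λ| − |λ̄| + μ(I) − ν(I) ≥ 0 when |I| > m; here Δ_k := Σ_{j=1}^{m} max{0, λ̄_{j−k} − λ_j} (terms with j−k ≤ 0 taken as 0) and λ̄[p,q] := λ̄_p + … + λ̄_q. -/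
open Finset

/-- Strip-concavity for a parallelogram-wise array of size `(n,m)` (entries `x i j`,
`i ≤ n`, `j ≤ m`). -/
def ParSC (n m : ℕ) (x : ℕ → ℕ → ℝ) : Prop :=
  ∀ i j, 1 ≤ i → i ≤ n → 1 ≤ j → j ≤ m →
    (pd x i j ≥ pd x (i - 1) j) ∧
    (j < m → pd x (i - 1) j ≥ pd x i (j + 1))

/-!
Writing `r i j := ∂x_{ij}`, strip-concavity says exactly that consecutive rows interlace,
`r (i-1) j ≤ r i j` and `r i (j+1) ≤ r (i-1) j`, while the boundary data fix `r 0 = λ̄`, `r n = λ`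
and the increments `|r i| - |r (i-1)| = ν_i - μ_i` of the row sums. So the theorem is about chains
of interlacing rows from `λ̄` to `λ` with prescribed increments `s_i`. In terms of the deficit
`g_a(k) = ∑_{p ≤ m-k} max(0, λ_{p+k} - a_p)` of a row `a` (this is `Δ_k` up to a term linear in
`λ, λ̄`), the condition reads `∑_{i ∈ I} s_i + g_{λ̄}(|I|) ≤ |λ| - |λ̄|`.

Both directions go by induction on `n`, peeling off the first step `a ↦ b = r 1`. Every row `b`
interlacing `a` with `|b| - |a| = t` has `g_b(k) ≥ max(g_a(k) - t, g_a(k+1))`, which propagates the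
condition from `b` to `a`. Conversely, if `t ≥ g_a(N)` for some `N`, raising each `a_p` towards
`λ_{p+K}` inside its window `[a_p, a_{p-1}]`, and interpolating between two consecutive thresholds
`K`, gives a `b` attaining this lower bound, and then the condition passes from `a` to `b`.
-/

lemma max_zero_sub_eq_of_le {y d : ℝ} (h0 : 0 ≤ d) (h : d ≤ max 0 y) :
    max 0 (y - d) = max 0 y - d := by
  rcases le_total y 0 with hy | hy
  · simp only [max_eq_left hy] at h ⊢
    rw [show d = 0 by linarith]
    simp [hy]
  · rw [max_eq_right hy] at h ⊢
    rw [max_eq_right (by linarith)]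

lemma min_sub_max_zero_eq {a b : ℝ} (x : ℝ) (h : b ≤ a) :
    min (a - b) (max 0 (x - b)) = max 0 (x - b) - max 0 (x - a) := by
  rcases le_total x b with h1 | h1
  · rw [max_eq_left (by linarith), max_eq_left (by linarith), min_eq_right (by linarith)]; ring
  rcases le_total x a with h2 | h2
  · rw [max_eq_right (by linarith), max_eq_left (by linarith), min_eq_right (by linarith)]; ring
  · rw [max_eq_right (by linarith), max_eq_right (by linarith), min_eq_left (by linarith)]; ring

lemma max_zero_sub_le_of_min_le {a b x d : ℝ} (h : min (a - b) (max 0 (x - b)) ≤ d) :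
    max 0 (x - b - d) ≤ max 0 (x - a) := by
  rcases min_le_iff.mp h with h | h
  · exact max_le_max le_rfl (by linarith)
  · exact (max_eq_left (by linarith [le_max_right 0 (x - b)])).trans_le (le_max_left _ _)

lemma sum_Icc_one_sub (f : ℕ → ℝ) (m : ℕ) :
    ∑ j ∈ Icc 1 m, (f j - f (j - 1)) = f m - f 0 := by
  induction m with
  | zero => simp
  | succ m ih => rw [sum_Icc_succ_top (by omega), ih, Nat.add_sub_cancel]; ring

lemma sum_Icc_one_eq_add_sum_Ico {m : ℕ} (hm : m ≠ 0) (f : ℕ → ℝ) :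
    ∑ p ∈ Icc 1 m, f p = f 1 + ∑ p ∈ Ico 1 m, f (p + 1) := by
  rw [← Ico_add_one_right_eq_Icc, sum_eq_sum_Ico_succ_bot (by omega), sum_Ico_add' (c := 1)]

lemma sum_Icc_one_succ (f : ℕ → ℝ) (n : ℕ) :
    ∑ i ∈ Icc 1 (n + 1), f i = f 1 + ∑ i ∈ Icc 1 n, f (i + 1) := by
  rw [sum_Icc_one_eq_add_sum_Ico (Nat.add_one_ne_zero n), Ico_add_one_right_eq_Icc]

lemma sum_Icc_ite_lt (f : ℕ → ℝ) (k m : ℕ) :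
    ∑ j ∈ Icc 1 m, (if k < j then f j else 0) = ∑ p ∈ Icc 1 (m - k), f (p + k) := by
  have : (Icc 1 m).filter (k < ·) = (Icc 1 (m - k)).map (addRightEmbedding k) := by
    ext j
    simp only [mem_filter, mem_Icc, mem_map, addRightEmbedding_apply]
    constructor
    · rintro ⟨⟨-, hjm⟩, hkj⟩
      exact ⟨j - k, by omega, by omega⟩
    · rintro ⟨p, hp, rfl⟩
      omega
  rw [← sum_filter, this, sum_map]
  rfl

lemma exists_le_le_sum_eq {s : Finset ℕ} {f g : ℕ → ℝ} {t : ℝ} (hfg : ∀ p ∈ s, f p ≤ g p)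
    (hft : ∑ p ∈ s, f p ≤ t) (htg : t ≤ ∑ p ∈ s, g p) :
    ∃ h : ℕ → ℝ, (∀ p ∈ s, f p ≤ h p ∧ h p ≤ g p) ∧ ∑ p ∈ s, h p = t := by
  set θ := (t - ∑ p ∈ s, f p) / (∑ p ∈ s, g p - ∑ p ∈ s, f p)
  have hθ0 : 0 ≤ θ := div_nonneg (by linarith) (by linarith)
  have hθ1 : θ ≤ 1 := div_le_one_of_le₀ (by linarith) (by linarith)
  refine ⟨fun p => f p + θ * (g p - f p), fun p hp => ?_, ?_⟩
  · have := hfg p hp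
    constructor <;> nlinarith
  · rw [sum_add_distrib, ← mul_sum, sum_sub_distrib]
    rcases eq_or_lt_of_le (sum_le_sum hfg) with heq | hlt
    · rw [← heq, sub_self, mul_zero]; linarith
    · simp only [θ]
      field_simp
      ring

lemma antitoneOn_Icc_of_succ_le {m : ℕ} {f : ℕ → ℝ} (h : ∀ j, 1 ≤ j → j < m → f (j + 1) ≤ f j) :
    AntitoneOn f (Set.Icc 1 m) :=
  antitoneOn_of_add_one_le Set.ordConnected_Icc fun j _ hj hj1 => h j hj.1 (by
    simp only [Set.mem_Icc] at hj1; omega)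

lemma sum_Icc_add_sum_Icc {k m : ℕ} (h : k ≤ m) (f : ℕ → ℝ) :
    ∑ j ∈ Icc 1 k, f j + ∑ j ∈ Icc (k + 1) m, f j = ∑ j ∈ Icc 1 m, f j := by
  have hIoc : ∀ b, Icc 1 b = Ioc 0 b := Icc_add_one_left_eq_Ioc 0
  rw [hIoc, hIoc, Icc_add_one_left_eq_Ioc]
  exact sum_Ioc_consecutive f (Nat.zero_le k) h

namespace Interlacing

def Interlaces (m : ℕ) (a b : ℕ → ℝ) : Prop :=
  (∀ j ∈ Icc 1 m, a j ≤ b j) ∧ ∀ j ∈ Ico 1 m, b (j + 1) ≤ a j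

def IsChain (m n : ℕ) (a l s : ℕ → ℝ) (r : ℕ → ℕ → ℝ) : Prop :=
  (∀ j ∈ Icc 1 m, r 0 j = a j) ∧ (∀ j ∈ Icc 1 m, r n j = l j) ∧
    ∀ i < n, Interlaces m (r i) (r (i + 1)) ∧
      ∑ j ∈ Icc 1 m, r (i + 1) j - ∑ j ∈ Icc 1 m, r i j = s (i + 1)

/-- The summands of `deficit m a l k = ∑ p ∈ Icc 1 (m - k), max 0 (l (p + k) - a p)`, padded with
zeros to the fixed range `Icc 1 m` so that they can be compared termwise for different `k`. -/
noncomputable def deficitTerm (m : ℕ) (a l : ℕ → ℝ) (k p : ℕ) : ℝ :=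
  if p + k ≤ m then max 0 (l (p + k) - a p) else 0

noncomputable def deficit (m : ℕ) (a l : ℕ → ℝ) (k : ℕ) : ℝ :=
  ∑ p ∈ Icc 1 m, deficitTerm m a l k p

def DeficitCondition (m n : ℕ) (a l s : ℕ → ℝ) : Prop :=
  ∑ i ∈ Icc 1 n, s i = ∑ j ∈ Icc 1 m, l j - ∑ j ∈ Icc 1 m, a j ∧
    ∀ I ⊆ Icc 1 n, ∑ i ∈ I, s i + deficit m a l #I ≤ ∑ j ∈ Icc 1 m, l j - ∑ j ∈ Icc 1 m, a j

variable {m : ℕ} {a b l : ℕ → ℝ} {k : ℕ}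

lemma Interlaces.step_le (h : Interlaces m a b) {j : ℕ} (hj : j ∈ Ico 1 m) :
    b (j + 1) ≤ b j :=
  (h.2 j hj).trans (h.1 j (Ico_subset_Icc_self hj))

lemma deficitTerm_nonneg (p : ℕ) : 0 ≤ deficitTerm m a l k p := by
  unfold deficitTerm; split_ifs <;> simp

lemma deficit_nonneg : 0 ≤ deficit m a l k :=
  sum_nonneg fun p _ => deficitTerm_nonneg p

lemma deficit_eq_zero_of_le (h : m ≤ k) : deficit m a l k = 0 :=
  sum_eq_zero fun p hp => if_neg (by simp only [mem_Icc] at hp; omega)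

lemma deficitTerm_antitone (hl : AntitoneOn l (Set.Icc 1 m)) {p k' : ℕ} (hp : 1 ≤ p)
    (hk : k ≤ k') : deficitTerm m a l k' p ≤ deficitTerm m a l k p := by
  unfold deficitTerm
  split_ifs with h' h
  · exact max_le_max le_rfl (sub_le_sub_right (hl ⟨by omega, by omega⟩ ⟨by omega, h'⟩
      (by omega)) _)
  · omega
  · exact le_max_left _ _
  · rfl

lemma deficit_eq_sum_Icc_sub (m : ℕ) (a l : ℕ → ℝ) (k : ℕ) :
    deficit m a l k = ∑ p ∈ Icc 1 (m - k), max 0 (l (p + k) - a p) := by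
  simp only [deficit, deficitTerm]
  rw [← sum_filter]
  congr 1
  ext p
  simp only [mem_filter, mem_Icc]
  omega

lemma deficit_succ_eq_sum_Ico :
    deficit m a l (k + 1) = ∑ p ∈ Ico 1 m, deficitTerm m a l (k + 1) p := by
  refine (sum_subset Ico_subset_Icc_self fun p hp hp' => if_neg ?_).symm
  simp only [mem_Icc, mem_Ico] at hp hp'
  omega

lemma deficit_sub_deficit_le (h : ∀ j ∈ Icc 1 m, a j ≤ b j) :
    deficit m a l k - deficit m b l k ≤ ∑ j ∈ Icc 1 m, b j - ∑ j ∈ Icc 1 m, a j := by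
  simp only [deficit, ← sum_sub_distrib]
  refine sum_le_sum fun p hp => ?_
  have hab := h p hp
  unfold deficitTerm
  split_ifs
  · calc max 0 (l (p + k) - a p) - max 0 (l (p + k) - b p)
        ≤ max (0 - 0) (l (p + k) - a p - (l (p + k) - b p)) := max_sub_max_le_max _ _ _ _
      _ = b p - a p := by rw [sub_self, sub_sub_sub_cancel_left, max_eq_right (by linarith)]
  · linarith

lemma deficit_succ_le (h : ∀ j ∈ Ico 1 m, b (j + 1) ≤ a j) :
    deficit m a l (k + 1) ≤ deficit m b l k := by
  rcases eq_or_ne m 0 with rfl | hm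
  · simpa [deficit_succ_eq_sum_Ico] using deficit_nonneg
  rw [deficit_succ_eq_sum_Ico, deficit, sum_Icc_one_eq_add_sum_Ico hm]
  refine le_add_of_nonneg_of_le (deficitTerm_nonneg 1) (sum_le_sum fun p hp => ?_)
  unfold deficitTerm
  rw [show p + 1 + k = p + (k + 1) by ring]
  split_ifs
  · exact max_le_max le_rfl (by linarith [h p hp])
  · rfl

/-- `a + raiseProfile m a l k` moves each `a p` towards `l (p + k)` as far as the window
`[a p, a (p - 1)]` allows; the first entry has no upper bound. -/
noncomputable def raiseProfile (m : ℕ) (a l : ℕ → ℝ) (k p : ℕ) : ℝ :=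
  if p = 1 then deficitTerm m a l k 1 else min (a (p - 1) - a p) (deficitTerm m a l k p)

lemma raiseProfile_succ {p : ℕ} (hp : p ≠ 0) :
    raiseProfile m a l k (p + 1) = min (a p - a (p + 1)) (deficitTerm m a l k (p + 1)) := by
  rw [raiseProfile, if_neg (by omega), Nat.add_sub_cancel]

lemma raiseProfile_le_deficitTerm (p : ℕ) : raiseProfile m a l k p ≤ deficitTerm m a l k p := by
  unfold raiseProfile
  split_ifs with h
  · rw [h]
  · exact min_le_right _ _

lemma gap_nonneg (ha : AntitoneOn a (Set.Icc 1 m)) {p : ℕ} (hp : p ∈ Ico 1 m) :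
    0 ≤ a p - a (p + 1) := by
  simp only [mem_Ico] at hp
  exact sub_nonneg.mpr (ha ⟨by omega, by omega⟩ ⟨by omega, by omega⟩ (by omega))

lemma raiseProfile_nonneg (ha : AntitoneOn a (Set.Icc 1 m)) {p : ℕ} (hp : p ∈ Icc 1 m) :
    0 ≤ raiseProfile m a l k p := by
  unfold raiseProfile
  split_ifs with h
  · exact deficitTerm_nonneg 1
  · simp only [mem_Icc] at hp
    have hgap := gap_nonneg ha (p := p - 1) (mem_Ico.mpr ⟨by omega, by omega⟩)
    rw [Nat.sub_add_cancel hp.1] at hgap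
    exact le_min hgap (deficitTerm_nonneg p)

lemma raiseProfile_antitone (hl : AntitoneOn l (Set.Icc 1 m)) {p k' : ℕ} (hp : 1 ≤ p)
    (hk : k ≤ k') :
    raiseProfile m a l k' p ≤ raiseProfile m a l k p := by
  unfold raiseProfile
  split_ifs
  · exact deficitTerm_antitone hl le_rfl hk
  · exact min_le_min le_rfl (deficitTerm_antitone hl hp hk)

lemma raiseProfile_succ_eq (ha : AntitoneOn a (Set.Icc 1 m)) {p : ℕ} (hp : p ∈ Ico 1 m) :
    raiseProfile m a l k (p + 1) = deficitTerm m a l k (p + 1) - deficitTerm m a l (k + 1) p := by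
  rw [raiseProfile_succ (by simp only [mem_Ico] at hp; omega)]
  unfold deficitTerm
  rw [show p + 1 + k = p + (k + 1) by ring]
  have hgap := gap_nonneg ha hp
  split_ifs
  · exact min_sub_max_zero_eq _ (by linarith)
  · rw [min_eq_right hgap, sub_zero]

lemma sum_raiseProfile (ha : AntitoneOn a (Set.Icc 1 m)) :
    ∑ p ∈ Icc 1 m, raiseProfile m a l k p = deficit m a l k - deficit m a l (k + 1) := by
  rcases eq_or_ne m 0 with rfl | hm
  · simp [deficit]
  have hk : deficit m a l k = _ := sum_Icc_one_eq_add_sum_Ico hm _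
  rw [sum_Icc_one_eq_add_sum_Ico hm, hk, deficit_succ_eq_sum_Ico,
    sum_congr rfl fun p hp => raiseProfile_succ_eq ha hp, sum_sub_distrib, raiseProfile,
    if_pos rfl]
  ring

lemma deficit_add_eq {δ : ℕ → ℝ} (hδ : ∀ p ∈ Icc 1 m, 0 ≤ δ p ∧ δ p ≤ deficitTerm m a l k p) :
    deficit m (a + δ) l k = deficit m a l k - ∑ p ∈ Icc 1 m, δ p := by
  rw [deficit, deficit, ← sum_sub_distrib]
  refine sum_congr rfl fun p hp => ?_
  obtain ⟨h0, hle⟩ := hδ p hp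
  unfold deficitTerm at hle ⊢
  split_ifs at hle ⊢
  · rw [Pi.add_apply, ← sub_sub, max_zero_sub_eq_of_le h0 hle]
  · rw [le_antisymm hle h0, sub_zero]

lemma deficit_add_le_succ (hm : m ≠ 0) {δ : ℕ → ℝ}
    (hδ : ∀ p ∈ Icc 1 m, raiseProfile m a l k p ≤ δ p) :
    deficit m (a + δ) l k ≤ deficit m a l (k + 1) := by
  have hk : deficit m (a + δ) l k = _ := sum_Icc_one_eq_add_sum_Ico hm _
  have hfirst : deficitTerm m (a + δ) l k 1 = 0 := by
    have h1 := hδ 1 (by simp only [mem_Icc]; omega)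
    rw [raiseProfile, if_pos rfl] at h1
    unfold deficitTerm at h1 ⊢
    split_ifs at h1 ⊢
    · rw [Pi.add_apply, ← sub_sub]
      exact max_eq_left (by linarith [le_max_right 0 (l (1 + k) - a 1)])
    · rfl
  rw [hk, hfirst, zero_add, deficit_succ_eq_sum_Ico]
  refine sum_le_sum fun p hp => ?_
  simp only [mem_Ico] at hp
  have hp1 := hδ (p + 1) (by simp only [mem_Icc]; omega)
  rw [raiseProfile_succ (by omega)] at hp1
  unfold deficitTerm at hp1 ⊢
  rw [show p + 1 + k = p + (k + 1) by ring] at hp1 ⊢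
  split_ifs at hp1 ⊢
  · rw [Pi.add_apply, ← sub_sub]
    exact max_zero_sub_le_of_min_le hp1
  · rfl

lemma exists_raise (hm : m ≠ 0) (ha : AntitoneOn a (Set.Icc 1 m))
    (hl : AntitoneOn l (Set.Icc 1 m)) {N : ℕ} {t : ℝ} (ht : deficit m a l N ≤ t) :
    ∃ K : ℕ, ∃ δ : ℕ → ℝ, ∑ p ∈ Icc 1 m, δ p = t ∧
      (∀ p ∈ Icc 1 m, raiseProfile m a l K p ≤ δ p) ∧
      (∀ p ∈ Ico 1 m, δ (p + 1) ≤ a p - a (p + 1)) ∧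
      ∀ k < K, ∀ p ∈ Icc 1 m, δ p ≤ deficitTerm m a l k p := by
  have hex : ∃ k, ∑ p ∈ Icc 1 m, raiseProfile m a l k p ≤ t :=
    ⟨N, by rw [sum_raiseProfile ha]; linarith [(deficit_nonneg : 0 ≤ deficit m a l (N + 1))]⟩
  have hgap : ∀ k, ∀ p ∈ Ico 1 m, raiseProfile m a l k (p + 1) ≤ a p - a (p + 1) := fun k p hp => by
    rw [raiseProfile_succ (by simp only [mem_Ico] at hp; omega)]
    exact min_le_left _ _
  refine ⟨Nat.find hex, ?_⟩
  rcases h : Nat.find hex with _ | K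
  · -- the whole surplus beyond `raiseProfile 0` goes to the first entry, which has no upper bound
    have h0 := h ▸ Nat.find_spec hex
    refine ⟨fun p => raiseProfile m a l 0 p +
      if p = 1 then t - ∑ q ∈ Icc 1 m, raiseProfile m a l 0 q else 0, ?_, ?_, ?_, by simp⟩
    · rw [sum_add_distrib, sum_ite_eq', if_pos (by simp only [mem_Icc]; omega)]
      ring
    · intro p _
      dsimp only
      split_ifs <;> linarith
    · intro p hp
      dsimp only
      rw [if_neg (by simp only [mem_Ico] at hp; omega), add_zero]
      exact hgap 0 p hp
  · have hK : ∑ p ∈ Icc 1 m, raiseProfile m a l (K + 1) p ≤ t := h ▸ Nat.find_spec hex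
    have hK' : t < ∑ p ∈ Icc 1 m, raiseProfile m a l K p :=
      not_le.mp (Nat.find_min hex (by omega))
    obtain ⟨δ, hδ, hsum⟩ := exists_le_le_sum_eq
      (fun p hp => raiseProfile_antitone hl (mem_Icc.mp hp).1 K.le_succ) hK hK'.le
    refine ⟨δ, hsum, fun p hp => (hδ p hp).1, fun p hp => ?_, fun k hk p hp => ?_⟩
    · simp only [mem_Ico] at hp
      exact (hδ (p + 1) (by simp only [mem_Icc]; omega)).2.trans (hgap K p (by simp; omega))
    · exact (hδ p hp).2.trans <| (raiseProfile_le_deficitTerm p).trans <|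
        deficitTerm_antitone hl (mem_Icc.mp hp).1 (by omega)

lemma Interlaces.antitoneOn (h : Interlaces m a b) : AntitoneOn b (Set.Icc 1 m) :=
  antitoneOn_Icc_of_succ_le fun _ hj hjm => h.step_le (mem_Ico.mpr ⟨hj, hjm⟩)

lemma exists_interlaces_deficit_le (hm : m ≠ 0) (ha : AntitoneOn a (Set.Icc 1 m))
    (hl : AntitoneOn l (Set.Icc 1 m)) {N : ℕ} {t : ℝ} (ht : deficit m a l N ≤ t) :
    ∃ b, Interlaces m a b ∧ ∑ j ∈ Icc 1 m, b j - ∑ j ∈ Icc 1 m, a j = t ∧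
      ∀ k, deficit m b l k ≤ max (deficit m a l k - t) (deficit m a l (k + 1)) := by
  obtain ⟨K, δ, hsum, hK, hgap, hlt⟩ := exists_raise hm ha hl ht
  have hδ0 : ∀ p ∈ Icc 1 m, 0 ≤ δ p := fun p hp => (raiseProfile_nonneg ha hp).trans (hK p hp)
  refine ⟨a + δ, ⟨fun j hj => ?_, fun j hj => ?_⟩, ?_, fun k => ?_⟩
  · simpa using hδ0 j hj
  · rw [Pi.add_apply]
    linarith [hgap j hj]
  · simp only [Pi.add_apply, sum_add_distrib, hsum]
    ring
  rcases lt_or_ge k K with hk | hk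
  · rw [deficit_add_eq fun p hp => ⟨hδ0 p hp, hlt k hk p hp⟩, hsum]
    exact le_max_left _ _
  · refine (deficit_add_le_succ hm fun p hp => ?_).trans (le_max_right _ _)
    exact (raiseProfile_antitone hl (mem_Icc.mp hp).1 hk).trans (hK p hp)

lemma subset_Icc_succ_cases {n : ℕ} {I : Finset ℕ} (hI : I ⊆ Icc 1 (n + 1)) :
    ∃ J ⊆ Icc 1 n,
      I = J.map (addRightEmbedding 1) ∨ I = insert 1 (J.map (addRightEmbedding 1)) := by
  refine ⟨(Icc 1 n).filter (· + 1 ∈ I), filter_subset _ _, ?_⟩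
  have key : ∀ x, x ≠ 1 →
      (x ∈ I ↔ x ∈ ((Icc 1 n).filter (· + 1 ∈ I)).map (addRightEmbedding 1)) := by
    intro x hx
    simp only [mem_map, mem_filter, mem_Icc, addRightEmbedding_apply]
    constructor
    · intro hxI
      have := mem_Icc.mp (hI hxI)
      exact ⟨x - 1, ⟨⟨by omega, by omega⟩, by rwa [Nat.sub_add_cancel (by omega)]⟩, by omega⟩
    · rintro ⟨y, ⟨-, hy⟩, rfl⟩
      exact hy
  by_cases h1 : 1 ∈ I
  · refine .inr (ext fun x => ?_)
    rcases eq_or_ne x 1 with rfl | hx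
    · simp [h1]
    · rw [mem_insert, key x hx, or_iff_right hx]
  · refine .inl (ext fun x => ?_)
    rcases eq_or_ne x 1 with rfl | hx
    · simp [h1]
    · exact key x hx

lemma one_notMem_map_succ {n : ℕ} {J : Finset ℕ} (hJ : J ⊆ Icc 1 n) :
    1 ∉ J.map (addRightEmbedding 1) := by
  simp only [mem_map, addRightEmbedding_apply, not_exists, not_and]
  intro x hx
  have := mem_Icc.mp (hJ hx)
  omega

variable {n : ℕ} {s : ℕ → ℝ}

lemma map_succ_subset_Icc {J : Finset ℕ} (hJ : J ⊆ Icc 1 n) :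
    J.map (addRightEmbedding 1) ⊆ Icc 1 (n + 1) :=
  (map_subset_map.mpr hJ).trans (by rw [map_add_right_Icc]; exact Icc_subset_Icc (by omega) le_rfl)

lemma sum_map_succ (J : Finset ℕ) :
    ∑ i ∈ J.map (addRightEmbedding 1), s i = ∑ i ∈ J, s (i + 1) :=
  sum_map _ _ _

lemma DeficitCondition.deficit_le (h : DeficitCondition m (n + 1) a l s) :
    deficit m a l n ≤ s 1 := by
  have hI := h.2 _ (map_succ_subset_Icc (subset_refl (Icc 1 n)))
  rw [sum_map_succ, card_map, Nat.card_Icc, Nat.add_sub_cancel, ← h.1, sum_Icc_one_succ] at hI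
  linarith

lemma DeficitCondition.of_interlaces (hab : Interlaces m a b)
    (hs : ∑ j ∈ Icc 1 m, b j - ∑ j ∈ Icc 1 m, a j = s 1)
    (h : DeficitCondition m n b l (fun i => s (i + 1))) : DeficitCondition m (n + 1) a l s := by
  refine ⟨by rw [sum_Icc_one_succ, h.1]; linarith, fun I hI => ?_⟩
  obtain ⟨J, hJ, rfl | rfl⟩ := subset_Icc_succ_cases hI
  · have := h.2 J hJ
    have := deficit_sub_deficit_le (l := l) (k := #J) hab.1
    rw [sum_map_succ, card_map]
    linarith
  · have := h.2 J hJ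
    have := deficit_succ_le (l := l) (k := #J) hab.2
    rw [sum_insert (one_notMem_map_succ hJ), card_insert_of_notMem (one_notMem_map_succ hJ),
      sum_map_succ, card_map]
    linarith

lemma DeficitCondition.tail (h : DeficitCondition m (n + 1) a l s)
    (hs : ∑ j ∈ Icc 1 m, b j - ∑ j ∈ Icc 1 m, a j = s 1)
    (hb : ∀ k, deficit m b l k ≤ max (deficit m a l k - s 1) (deficit m a l (k + 1))) :
    DeficitCondition m n b l (fun i => s (i + 1)) := by
  refine ⟨by have := h.1; rw [sum_Icc_one_succ] at this; linarith, fun J hJ => ?_⟩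
  rcases le_max_iff.mp (hb #J) with hb | hb
  · have := h.2 _ (map_succ_subset_Icc hJ)
    rw [sum_map_succ, card_map] at this
    linarith
  · have := h.2 (insert 1 _)
      (insert_subset (by simp only [mem_Icc]; omega) (map_succ_subset_Icc hJ))
    rw [sum_insert (one_notMem_map_succ hJ), card_insert_of_notMem (one_notMem_map_succ hJ),
      sum_map_succ, card_map] at this
    linarith

lemma DeficitCondition.exists_interlaces (ha : AntitoneOn a (Set.Icc 1 m))
    (hl : AntitoneOn l (Set.Icc 1 m)) (h : DeficitCondition m (n + 1) a l s) :
    ∃ b, Interlaces m a b ∧ ∑ j ∈ Icc 1 m, b j - ∑ j ∈ Icc 1 m, a j = s 1 ∧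
      DeficitCondition m n b l (fun i => s (i + 1)) := by
  rcases eq_or_ne m 0 with rfl | hm
  · have hs1 : s 1 = 0 := by
      have h1 := h.2 {1} (by simp)
      simp only [sum_singleton, deficit_eq_zero_of_le (Nat.zero_le _),
        Icc_eq_empty_of_lt zero_lt_one, sum_empty] at h1
      linarith [h.deficit_le, (deficit_nonneg : 0 ≤ deficit 0 a l n)]
    refine ⟨a, ⟨by simp, by simp⟩, by simp [hs1], h.tail (by simp [hs1]) fun k => ?_⟩
    simp [hs1]
  · obtain ⟨b, hab, hs, hb⟩ := exists_interlaces_deficit_le hm ha hl h.deficit_le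
    exact ⟨b, hab, hs, h.tail hs hb⟩

lemma Interlaces.congr {a' b' : ℕ → ℝ} (h : Interlaces m a b) (ha : ∀ j ∈ Icc 1 m, a j = a' j)
    (hb : ∀ j ∈ Icc 1 m, b j = b' j) : Interlaces m a' b' := by
  refine ⟨fun j hj => ?_, fun j hj => ?_⟩
  · rw [← ha j hj, ← hb j hj]
    exact h.1 j hj
  · have := mem_Ico.mp hj
    rw [← ha j (mem_Icc.mpr ⟨by omega, by omega⟩), ← hb (j + 1) (mem_Icc.mpr ⟨by omega, by omega⟩)]
    exact h.2 j hj

lemma exists_isChain_zero_iff :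
    (∃ r, IsChain m 0 a l s r) ↔ ∀ j ∈ Icc 1 m, a j = l j :=
  ⟨fun ⟨_, h0, hn, _⟩ j hj => (h0 j hj).symm.trans (hn j hj),
    fun h => ⟨fun _ => a, fun _ _ => rfl, h, fun _ hi => absurd hi (Nat.not_lt_zero _)⟩⟩

lemma exists_isChain_succ_iff :
    (∃ r, IsChain m (n + 1) a l s r) ↔ ∃ b, Interlaces m a b ∧
      ∑ j ∈ Icc 1 m, b j - ∑ j ∈ Icc 1 m, a j = s 1 ∧
        ∃ r, IsChain m n b l (fun i => s (i + 1)) r := by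
  constructor
  · rintro ⟨r, h0, hn, hstep⟩
    obtain ⟨hint, hsum⟩ := hstep 0 n.succ_pos
    refine ⟨r 1, hint.congr h0 fun _ _ => rfl, by rw [← hsum, sum_congr rfl h0],
      fun i => r (i + 1), fun _ _ => rfl, hn, fun i hi => hstep (i + 1) (by omega)⟩
  · rintro ⟨b, hab, hs, r, h0, hn, hstep⟩
    refine ⟨fun | 0 => a | i + 1 => r i, fun _ _ => rfl, hn, fun i hi => ?_⟩
    rcases i with _ | i
    · exact ⟨hab.congr (fun _ _ => rfl) fun j hj => (h0 j hj).symm,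
        by rw [← hs, sum_congr rfl h0]⟩
    · exact hstep i (by omega)

lemma deficitCondition_zero_iff :
    DeficitCondition m 0 a l s ↔ ∀ j ∈ Icc 1 m, a j = l j := by
  simp only [DeficitCondition, Icc_eq_empty_of_lt zero_lt_one, subset_empty, forall_eq,
    sum_empty, card_empty, zero_add, deficit_eq_sum_Icc_sub, Nat.sub_zero, add_zero]
  constructor
  · rintro ⟨hT, hdef⟩ j hj
    rw [← hT] at hdef
    have hle : ∀ p ∈ Icc 1 m, l p - a p ≤ 0 := fun p hp =>
      max_eq_left_iff.mp ((sum_eq_zero_iff_of_nonneg fun _ _ => le_max_left _ _).mp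
        (le_antisymm hdef (sum_nonneg fun _ _ => le_max_left _ _)) p hp)
    rw [← sum_sub_distrib, eq_comm] at hT
    linarith [(sum_eq_zero_iff_of_nonpos hle).mp hT j hj]
  · intro h
    rw [sum_congr rfl h, sub_self]
    refine ⟨rfl, (sum_eq_zero fun p hp => ?_).le⟩
    rw [h p hp, sub_self, max_self]

theorem exists_isChain_iff (hl : AntitoneOn l (Set.Icc 1 m)) (ha : AntitoneOn a (Set.Icc 1 m)) :
    (∃ r, IsChain m n a l s r) ↔ DeficitCondition m n a l s := by
  induction n generalizing a s with
  | zero => rw [exists_isChain_zero_iff, deficitCondition_zero_iff]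
  | succ n ih =>
    rw [exists_isChain_succ_iff]
    constructor
    · rintro ⟨b, hab, hs, hchain⟩
      exact .of_interlaces hab hs ((ih hab.antitoneOn).mp hchain)
    · intro h
      obtain ⟨b, hab, hs, hb⟩ := h.exists_interlaces ha hl
      exact ⟨b, hab, hs, (ih hab.antitoneOn).mpr hb⟩

end Interlacing

lemma sum_Icc_sub_sum_Icc_sub_sum_ite_eq {m k : ℕ} (hk : k ≤ m) (a l : ℕ → ℝ) :
    ∑ j ∈ Icc 1 k, l j - ∑ j ∈ Icc (m - k + 1) m, a j
      - ∑ j ∈ Icc 1 m, (if k < j then max 0 (a (j - k) - l j) else 0)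
      = ∑ j ∈ Icc 1 m, l j - ∑ j ∈ Icc 1 m, a j - Interlacing.deficit m a l k := by
  have hl : ∑ p ∈ Icc 1 (m - k), l (p + k) = ∑ j ∈ Icc (k + 1) m, l j := by
    have hIcc : Icc (k + 1) m = (Icc 1 (m - k)).map (addRightEmbedding k) := by
      rw [map_add_right_Icc, Nat.sub_add_cancel hk, add_comm]
    rw [hIcc, sum_map]
    rfl
  rw [sum_Icc_ite_lt, Interlacing.deficit_eq_sum_Icc_sub, ← sum_Icc_add_sum_Icc hk l,
    ← sum_Icc_add_sum_Icc (Nat.sub_le m k) a, ← hl]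
  have : ∑ p ∈ Icc 1 (m - k), max 0 (a (p + k - k) - l (p + k))
      - ∑ p ∈ Icc 1 (m - k), max 0 (l (p + k) - a p)
      = ∑ p ∈ Icc 1 (m - k), a p - ∑ p ∈ Icc 1 (m - k), l (p + k) := by
    rw [← sum_sub_distrib, ← sum_sub_distrib]
    refine sum_congr rfl fun p _ => ?_
    rw [Nat.add_sub_cancel]
    rcases le_total (a p) (l (p + k)) with h | h
    · rw [max_eq_left (by linarith), max_eq_right (by linarith)]; ring
    · rw [max_eq_right (by linarith), max_eq_left (by linarith)]; ring
  linarith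

lemma pd_partialSum (r : ℕ → ℕ → ℝ) (c : ℕ → ℝ) {i j : ℕ} (hj : 1 ≤ j) :
    pd (fun i j => c i + ∑ p ∈ Icc 1 j, r i p) i j = r i j := by
  obtain ⟨j, rfl⟩ : ∃ j', j = j' + 1 := ⟨j - 1, by omega⟩
  simp only [pd, sum_Icc_succ_top (Nat.le_add_left 1 j), Nat.add_sub_cancel]
  ring

theorem exists_parSC_iff_exists_isChain (n m : ℕ) (lam lamb mu nu : ℕ → ℝ) :
    (∃ x : ℕ → ℕ → ℝ, x 0 0 = 0 ∧ ParSC n m x ∧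
      (∀ j, 1 ≤ j → j ≤ m → pd x n j = lam j) ∧
      (∀ j, 1 ≤ j → j ≤ m → pd x 0 j = lamb j) ∧
      (∀ i, 1 ≤ i → i ≤ n → x i 0 - x (i - 1) 0 = mu i) ∧
      (∀ i, 1 ≤ i → i ≤ n → x i m - x (i - 1) m = nu i)) ↔
    ∃ r, Interlacing.IsChain m n lamb lam (fun i => nu i - mu i) r := by
  constructor
  · rintro ⟨x, -, hSC, hlam, hlamb, hmu, hnu⟩
    refine ⟨pd x, fun j hj => hlamb j (mem_Icc.mp hj).1 (mem_Icc.mp hj).2,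
      fun j hj => hlam j (mem_Icc.mp hj).1 (mem_Icc.mp hj).2, fun i hi => ⟨⟨fun j hj => ?_,
      fun j hj => ?_⟩, ?_⟩⟩
    · simp only [mem_Icc] at hj
      exact (hSC (i + 1) j (by omega) hi hj.1 hj.2).1
    · simp only [mem_Ico] at hj
      exact (hSC (i + 1) j (by omega) hi hj.1 hj.2.le).2 hj.2
    · have hmu' := hmu (i + 1) (by omega) hi
      have hnu' := hnu (i + 1) (by omega) hi
      rw [Nat.add_sub_cancel] at hmu' hnu'
      simp only [pd, sum_Icc_one_sub]
      linarith
  · rintro ⟨r, h0, hn, hstep⟩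
    refine ⟨fun i j => ∑ t ∈ Icc 1 i, mu t + ∑ p ∈ Icc 1 j, r i p, by simp, ?_, ?_, ?_, ?_, ?_⟩
    · intro i j hi hin hj hjm
      obtain ⟨i, rfl⟩ : ∃ i', i = i' + 1 := ⟨i - 1, by omega⟩
      obtain ⟨hint, -⟩ := hstep i (by omega)
      simp only [pd_partialSum r _ hj, pd_partialSum r _ (Nat.le_succ_of_le hj), Nat.add_sub_cancel]
      exact ⟨hint.1 j (mem_Icc.mpr ⟨hj, hjm⟩), fun hj' => hint.2 j (mem_Ico.mpr ⟨hj, hj'⟩)⟩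
    · intro j hj hjm
      rw [pd_partialSum r _ hj, hn j (mem_Icc.mpr ⟨hj, hjm⟩)]
    · intro j hj hjm
      rw [pd_partialSum r _ hj, h0 j (mem_Icc.mpr ⟨hj, hjm⟩)]
    · intro i hi _
      obtain ⟨i, rfl⟩ : ∃ i', i = i' + 1 := ⟨i - 1, by omega⟩
      simp [sum_Icc_succ_top]
    · intro i hi hin
      obtain ⟨i, rfl⟩ : ∃ i', i = i' + 1 := ⟨i - 1, by omega⟩
      have := (hstep i (by omega)).2
      simp only [sum_Icc_succ_top (Nat.le_add_left 1 i), Nat.add_sub_cancel]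
      linarith

theorem stmt16_general (n m : ℕ) (lam lamb mu nu : ℕ → ℝ)
    (hld : ∀ j, 1 ≤ j → j < m → lam (j + 1) ≤ lam j)
    (hlbd : ∀ j, 1 ≤ j → j < m → lamb (j + 1) ≤ lamb j)
    (hsum : (∑ j ∈ Icc 1 m, lam j) - (∑ j ∈ Icc 1 m, lamb j)
      + (∑ i ∈ Icc 1 n, mu i) - (∑ i ∈ Icc 1 n, nu i) = 0) :
    (∃ x : ℕ → ℕ → ℝ, x 0 0 = 0 ∧ ParSC n m x ∧
      (∀ j, 1 ≤ j → j ≤ m → pd x n j = lam j) ∧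
      (∀ j, 1 ≤ j → j ≤ m → pd x 0 j = lamb j) ∧
      (∀ i, 1 ≤ i → i ≤ n → x i 0 - x (i - 1) 0 = mu i) ∧
      (∀ i, 1 ≤ i → i ≤ n → x i m - x (i - 1) m = nu i)) ↔
    (∀ I : Finset ℕ, I ⊆ Icc 1 n →
      (I.card ≤ m →
        (∑ j ∈ Icc 1 I.card, lam j) - (∑ j ∈ Icc (m - I.card + 1) m, lamb j)
          + (∑ i ∈ I, mu i) - (∑ i ∈ I, nu i)
          - (∑ j ∈ Icc 1 m, if I.card < j
              then max 0 (lamb (j - I.card) - lam j) else 0) ≥ 0) ∧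
      (m < I.card →
        (∑ j ∈ Icc 1 m, lam j) - (∑ j ∈ Icc 1 m, lamb j)
          + (∑ i ∈ I, mu i) - (∑ i ∈ I, nu i) ≥ 0)) := by
  rw [exists_parSC_iff_exists_isChain, Interlacing.exists_isChain_iff
    (antitoneOn_Icc_of_succ_le hld) (antitoneOn_Icc_of_succ_le hlbd), Interlacing.DeficitCondition,
    sum_sub_distrib, and_iff_right (by linarith)]
  refine forall₂_congr fun I _ => ?_
  rw [sum_sub_distrib]
  rcases le_or_gt #I m with hk | hk
  · have := sum_Icc_sub_sum_Icc_sub_sum_ite_eq hk lamb lam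
    simp only [hk, true_implies, not_lt.mpr hk, false_implies, and_true]
    constructor <;> intro <;> linarith
  · rw [Interlacing.deficit_eq_zero_of_le hk.le]
    simp only [hk, true_implies, not_le.mpr hk, false_implies, true_and]
    constructor <;> intro <;> linarith

/-- Parallelogram-wise existence theorem: a strip-concave `▱`-array with boundary data
`λ, λ̄, μ, ν` exists iff the deficit inequalities hold for every `I ⊆ {1,…,n}`. -/
theorem stmt16 (n m : ℕ) (hn : 1 ≤ n) (lam lamb mu nu : ℕ → ℝ)
    (hld : ∀ j, 1 ≤ j → j < m → lam (j + 1) ≤ lam j)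
    (hlbd : ∀ j, 1 ≤ j → j < m → lamb (j + 1) ≤ lamb j)
    (hsum : (∑ j ∈ Icc 1 m, lam j) - (∑ j ∈ Icc 1 m, lamb j)
      + (∑ i ∈ Icc 1 n, mu i) - (∑ i ∈ Icc 1 n, nu i) = 0) :
    (∃ x : ℕ → ℕ → ℝ, x 0 0 = 0 ∧ ParSC n m x ∧
      (∀ j, 1 ≤ j → j ≤ m → pd x n j = lam j) ∧
      (∀ j, 1 ≤ j → j ≤ m → pd x 0 j = lamb j) ∧
      (∀ i, 1 ≤ i → i ≤ n → x i 0 - x (i - 1) 0 = mu i) ∧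
      (∀ i, 1 ≤ i → i ≤ n → x i m - x (i - 1) m = nu i)) ↔
    (∀ I : Finset ℕ, I ⊆ Icc 1 n →
      (I.card ≤ m →
        (∑ j ∈ Icc 1 I.card, lam j) - (∑ j ∈ Icc (m - I.card + 1) m, lamb j)
          + (∑ i ∈ I, mu i) - (∑ i ∈ I, nu i)
          - (∑ j ∈ Icc 1 m, if I.card < j
              then max 0 (lamb (j - I.card) - lam j) else 0) ≥ 0) ∧
      (m < I.card →
        (∑ j ∈ Icc 1 m, lam j) - (∑ j ∈ Icc 1 m, lamb j)
          + (∑ i ∈ I, mu i) - (∑ i ∈ I, nu i) ≥ 0)) :=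
  stmt16_general n m lam lamb mu nu hld hlbd hsum
end

section
/- Let λ, ν ∈ R^n with λ weakly decreasing. If there exists a strip-concave triangular array X of size n with x_{i0} = 0, ∂x_{nj} = λ_j and x_{ii} − x_{i−1,i−1} = ν_i for all i, then λ_1 + … + λ_k ≥ Σ_{i∈I} ν_i for every I ⊆ {1,…,n} with |I| = k, and λ_1 + … + λ_n = ν_1 + … + ν_n; i.e., ν lies in the permutohedron generated by λ. -/
open Finset

/-!
Write `ν_i = x_{ii} − x_{i−1,i−1}` and `k = |I|`. By induction on `m`, every `I ⊆ {1,…,m}`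
satisfies `ν(I) ≤ x_{m,k}`. If `m + 1 ∉ I`, the first strip-concavity inequality, summed along
the row, gives `x_{m,k} ≤ x_{m+1,k}`. If `m + 1 ∈ I`, the second one, summed over
`j = k+1,…,m`, gives `x_{m+1,m+1} − x_{m+1,k+1} ≤ x_{m,m} − x_{m,k}`, which is exactly what the
extra term `ν_{m+1}` requires. For `m = n` the bottom row reads `x_{n,k} = λ_1 + … + λ_k`, and
`ν(I)` for `I = {1,…,n}` telescopes along the diagonal to `x_{nn}`.
-/

theorem sum_Ioc_sub_pred (f : ℕ → ℝ) {a b : ℕ} (hab : a ≤ b) :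
    ∑ i ∈ Ioc a b, (f i - f (i - 1)) = f b - f a := by
  induction b, hab using Nat.le_induction with
  | base => simp
  | succ b hab ih => rw [sum_Ioc_succ_top hab, ih, Nat.add_sub_cancel]; ring

theorem sub_eq_sum_Ioc_pd (x : ℕ → ℕ → ℝ) (i : ℕ) {a b : ℕ} (hab : a ≤ b) :
    x i b - x i a = ∑ j ∈ Ioc a b, pd x i j :=
  (sum_Ioc_sub_pred (x i) hab).symm

theorem subset_Icc_of_subset_Icc_succ {I : Finset ℕ} {m : ℕ} (hI : I ⊆ Icc 1 (m + 1))
    (hm : m + 1 ∉ I) : I ⊆ Icc 1 m := fun a ha => by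
  have hmem := mem_Icc.mp (hI ha)
  have hne : a ≠ m + 1 := fun h => hm (h ▸ ha)
  rw [mem_Icc]
  omega

namespace TriSC

variable {n m : ℕ} {x : ℕ → ℕ → ℝ}

theorem pd_le_pd_succ_row (hsc : TriSC n x) (hm : m + 1 ≤ n) {j : ℕ} (hj : j ∈ Icc 1 m) :
    pd x m j ≤ pd x (m + 1) j := by
  rw [mem_Icc] at hj
  simpa using (hsc (m + 1) j (by omega) hm hj.1 (by omega)).1 (by omega)

theorem pd_succ_row_succ_le (hsc : TriSC n x) (hm : m + 1 ≤ n) {j : ℕ} (hj : j ∈ Icc 1 m) :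
    pd x (m + 1) (j + 1) ≤ pd x m j := by
  rw [mem_Icc] at hj
  simpa using (hsc (m + 1) j (by omega) hm hj.1 (by omega)).2 (by omega)

theorem sub_le_sub_succ_row (hsc : TriSC n x) (hm : m + 1 ≤ n) {k : ℕ} (hk : k ≤ m) :
    x m k - x m 0 ≤ x (m + 1) k - x (m + 1) 0 := by
  rw [sub_eq_sum_Ioc_pd _ _ k.zero_le, sub_eq_sum_Ioc_pd _ _ k.zero_le]
  refine sum_le_sum fun j hj => hsc.pd_le_pd_succ_row hm ?_
  simp only [mem_Ioc, mem_Icc] at hj ⊢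
  omega

theorem diag_sub_le (hsc : TriSC n x) (hm : m + 1 ≤ n) {k : ℕ} (hk : k ≤ m) :
    x (m + 1) (m + 1) - x (m + 1) (k + 1) ≤ x m m - x m k := by
  rw [sub_eq_sum_Ioc_pd _ _ (by omega : k + 1 ≤ m + 1), sub_eq_sum_Ioc_pd _ _ hk,
    ← map_add_right_Ioc, sum_map]
  refine sum_le_sum fun j hj => hsc.pd_succ_row_succ_le hm ?_
  simp only [mem_Ioc, mem_Icc] at hj ⊢
  omega

theorem sum_diag_sub_le (hsc : TriSC n x) (hx0 : ∀ i ≤ n, x i 0 = 0) :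
    ∀ m ≤ n, ∀ I ⊆ Icc 1 m, ∑ i ∈ I, (x i i - x (i - 1) (i - 1)) ≤ x m #I := by
  intro m
  induction m with
  | zero =>
    intro h0 I hI
    obtain rfl : I = ∅ := subset_empty.mp (by simpa using hI)
    simp [hx0 0 h0]
  | succ m ih =>
    intro hmn I hI
    by_cases htop : m + 1 ∈ I
    · have hJ := subset_Icc_of_subset_Icc_succ ((erase_subset _ I).trans hI) (notMem_erase _ I)
      have hk : #(I.erase (m + 1)) ≤ m := by simpa using card_le_card hJ
      rw [← add_sum_erase I _ htop, ← card_erase_add_one htop, Nat.add_sub_cancel]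
      linarith [ih (by omega) _ hJ, hsc.diag_sub_le hmn hk]
    · have hJ := subset_Icc_of_subset_Icc_succ hI htop
      have hk : #I ≤ m := by simpa using card_le_card hJ
      have hrow := hsc.sub_le_sub_succ_row hmn hk
      rw [hx0 m (by omega), hx0 (m + 1) hmn] at hrow
      linarith [ih (by omega) I hJ]

end TriSC

theorem stmt19_general (n : ℕ) (lam nu : ℕ → ℝ) (x : ℕ → ℕ → ℝ)
    (hsc : TriSC n x) (hx0 : ∀ i ≤ n, x i 0 = 0)
    (hl : ∀ j, 1 ≤ j → j ≤ n → pd x n j = lam j)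
    (hnu : ∀ i, 1 ≤ i → i ≤ n → x i i - x (i - 1) (i - 1) = nu i) :
    (∀ I : Finset ℕ, I ⊆ Icc 1 n → ∑ i ∈ I, nu i ≤ ∑ j ∈ Icc 1 I.card, lam j) ∧
    (∑ j ∈ Icc 1 n, lam j = ∑ i ∈ Icc 1 n, nu i) := by
  have hlam : ∀ k ≤ n, ∑ j ∈ Icc 1 k, lam j = x n k := fun k hk => by
    rw [← sub_zero (x n k), ← hx0 n le_rfl, sub_eq_sum_Ioc_pd _ _ k.zero_le,
      ← Icc_add_one_left_eq_Ioc]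
    refine sum_congr rfl fun j hj => ?_
    obtain ⟨hj1, hjk⟩ := mem_Icc.mp hj
    exact (hl j hj1 (hjk.trans hk)).symm
  have hdiag : ∀ I ⊆ Icc 1 n, ∑ i ∈ I, nu i = ∑ i ∈ I, (x i i - x (i - 1) (i - 1)) :=
    fun I hI => sum_congr rfl fun i hi => by
      obtain ⟨h1, h2⟩ := mem_Icc.mp (hI hi)
      exact (hnu i h1 h2).symm
  refine ⟨fun I hI => ?_, ?_⟩
  · rw [hdiag I hI, hlam _ (by simpa using card_le_card hI)]
    exact hsc.sum_diag_sub_le hx0 n le_rfl I hI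
  · have hIoc : Icc 1 n = Ioc 0 n := Icc_add_one_left_eq_Ioc 0 n
    rw [hlam n le_rfl, hdiag _ subset_rfl, hIoc, sum_Ioc_sub_pred (fun i => x i i) n.zero_le,
      hx0 0 n.zero_le, sub_zero]

/-- If a strip-concave triangular array realizes `λ` (weakly decreasing) and `ν`, then
`ν` lies in the permutohedron generated by `λ`: `ν(I) ≤ λ[1,|I|]` for all `I ⊆ {1,…,n}`
and `|ν| = |λ|`. -/
theorem stmt19 (n : ℕ) (lam nu : ℕ → ℝ) (x : ℕ → ℕ → ℝ)
    (hdec : ∀ j, 1 ≤ j → j < n → lam (j + 1) ≤ lam j)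
    (hsc : TriSC n x) (hx0 : ∀ i ≤ n, x i 0 = 0)
    (hl : ∀ j, 1 ≤ j → j ≤ n → pd x n j = lam j)
    (hnu : ∀ i, 1 ≤ i → i ≤ n → x i i - x (i - 1) (i - 1) = nu i) :
    (∀ I : Finset ℕ, I ⊆ Icc 1 n → ∑ i ∈ I, nu i ≤ ∑ j ∈ Icc 1 I.card, lam j) ∧
    (∑ j ∈ Icc 1 n, lam j = ∑ i ∈ Icc 1 n, nu i) :=
  stmt19_general n lam nu x hsc hx0 hl hnu
end
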